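/- arXiv:2012.06065 — 10 statements merged into one kernel-verified Lean document; each statement's English description precedes it below -/
import Mathlib

section
/- In a cyclic assignment with Δ workers, each holding ℓ ≤ Δ consecutive symbols modulo Δ, the maximum number of symbols that can be processed across all workers such that a fixed symbol j is processed exactly c times (0 ≤ c ≤ ℓ) equals Δℓ - ℓ(ℓ+1)/2 + Σ_{i=0}^{c-1}(ℓ-i), and this value is independent of j. -/
open Finset

/-!
Index the workers by the position `p = (j - w) mod Δ` of `j` in them. A worker at position `p`
that does not process `j` stops before `p`, so it processes at most `min p ℓ` symbols; one that
does processes at most `ℓ = min p ℓ + (ℓ - p)`. As `ℓ - p` decreases in `p`, the `c` workers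
processing `j` gain the most when they sit at positions `0, …, c - 1`, and
`∑_{p < Δ} min p ℓ = Δℓ - ℓ(ℓ+1)/2`.
-/

theorem sum_le_sum_range_card_of_antitone {M : Type*} [AddCommMonoid M] [PartialOrder M]
    [IsOrderedAddMonoid M] {f : ℕ → M} (hf : Antitone f) (s : Finset ℕ) :
    ∑ x ∈ s, f x ≤ ∑ i ∈ range #s, f i := by
  induction s using Finset.induction_on_max with
  | empty => simp
  | insert a s has ih =>
    have ha : a ∉ s := fun h => lt_irrefl a (has a h)
    have hcard : #s ≤ a := by
      simpa using card_le_card (fun x hx => mem_range.2 (has x hx) : s ⊆ range a)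
    rw [sum_insert ha, card_insert_of_notMem ha, sum_range_succ, add_comm]
    exact add_le_add ih (hf hcard)

theorem range_filter_lt {n c : ℕ} (h : c ≤ n) : (range n).filter (· < c) = range c := by
  ext p
  simp only [mem_filter, mem_range]
  omega

theorem sum_range_min_add_triangle {n ℓ : ℕ} (hℓ : ℓ ≤ n) :
    ∑ p ∈ range n, min p ℓ + ℓ * (ℓ + 1) / 2 = n * ℓ := by
  have hdrop : ∀ m, ℓ ≤ m → ∑ p ∈ range m, (ℓ - p) = ∑ p ∈ range ℓ, (ℓ - p) := fun m hm =>
    (sum_subset (range_subset_range.2 hm) fun p _ hp => by simp only [mem_range] at hp; omega).symm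
  have htriangle : ∑ p ∈ range n, (ℓ - p) = ℓ * (ℓ + 1) / 2 := by
    have hreflect : ∑ p ∈ range (ℓ + 1), (ℓ - p) = ∑ p ∈ range (ℓ + 1), p := by
      simpa using sum_range_reflect (fun p => p) (ℓ + 1)
    rw [hdrop n hℓ, ← hdrop (ℓ + 1) (Nat.le_succ ℓ), hreflect, sum_range_id, mul_comm,
      Nat.add_sub_cancel]
  rw [← htriangle, ← sum_add_distrib]
  rw [sum_congr rfl fun p _ => (by omega : min p ℓ + (ℓ - p) = ℓ)]
  simp

section Processing

variable {ι : Type*} [Fintype ι] {n ℓ c : ℕ}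

theorem sum_comp_equiv_fin (e : ι ≃ Fin n) (g : ℕ → ℕ) :
    ∑ w, g (e w) = ∑ p ∈ range n, g p := by
  rw [e.sum_comp (fun v : Fin n => g v), Fin.sum_univ_eq_sum_range]

theorem sum_le_of_card_processed (e : ι ≃ Fin n) {t : ι → ℕ} (ht : ∀ w, t w ≤ ℓ)
    (hc : #{w | (e w : ℕ) < t w} = c) :
    ∑ w, t w ≤ ∑ p ∈ range n, min p ℓ + ∑ i ∈ range c, (ℓ - i) := by
  set P : Finset ι := {w | (e w : ℕ) < t w}
  have hpoint : ∀ w, t w ≤ min (e w : ℕ) ℓ + if (e w : ℕ) < t w then ℓ - e w else 0 := by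
    intro w
    have := ht w
    split_ifs <;> omega
  calc ∑ w, t w ≤ ∑ w, (min (e w : ℕ) ℓ + if (e w : ℕ) < t w then ℓ - e w else 0) :=
        sum_le_sum fun w _ => hpoint w
    _ = ∑ p ∈ range n, min p ℓ + ∑ p ∈ P.map (e.toEmbedding.trans Fin.valEmbedding), (ℓ - p) := by
        rw [sum_add_distrib, sum_comp_equiv_fin e (fun p => min p ℓ), ← sum_filter, sum_map]
        rfl
    _ ≤ ∑ p ∈ range n, min p ℓ + ∑ i ∈ range c, (ℓ - i) := by
        refine Nat.add_le_add_left ?_ _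
        rw [← hc, ← card_map (e.toEmbedding.trans Fin.valEmbedding)]
        exact sum_le_sum_range_card_of_antitone (fun a b hab => Nat.sub_le_sub_left hab ℓ) _

theorem exists_card_processed_sum_eq (e : ι ≃ Fin n) (hℓ : ℓ ≤ n) (hc : c ≤ ℓ) :
    ∃ t : ι → ℕ, (∀ w, t w ≤ ℓ) ∧ #{w | (e w : ℕ) < t w} = c ∧
      ∑ w, t w = ∑ p ∈ range n, min p ℓ + ∑ i ∈ range c, (ℓ - i) := by
  set g : ℕ → ℕ := fun p => if p < c then ℓ else min p ℓ
  have hg_lt : ∀ p, p < g p ↔ p < c := fun p => by simp only [g]; split_ifs <;> omega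
  have hg : ∀ p, g p = min p ℓ + if p < c then ℓ - p else 0 := fun p => by
    simp only [g]; split_ifs <;> omega
  refine ⟨fun w => g (e w), fun w => by simp only [g]; split_ifs <;> omega, ?_, ?_⟩
  · simp only [hg_lt]
    rw [card_filter, sum_comp_equiv_fin e (fun p => if p < c then 1 else 0), ← card_filter,
      range_filter_lt (hc.trans hℓ), card_range]
  · rw [sum_comp_equiv_fin e, sum_congr rfl fun p _ => hg p, sum_add_distrib, ← sum_filter,
      range_filter_lt (hc.trans hℓ)]

theorem isGreatest_sum_of_card_processed (e : ι ≃ Fin n) (hℓ : ℓ ≤ n) (hc : c ≤ ℓ) :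
    IsGreatest {q | ∃ t : ι → ℕ, (∀ w, t w ≤ ℓ) ∧ #{w | (e w : ℕ) < t w} = c ∧ q = ∑ w, t w}
      (∑ p ∈ range n, min p ℓ + ∑ i ∈ range c, (ℓ - i)) := by
  refine ⟨?_, ?_⟩
  · obtain ⟨t, ht, hcard, hsum⟩ := exists_card_processed_sum_eq e hℓ hc
    exact ⟨t, ht, hcard, hsum.symm⟩
  · rintro q ⟨t, ht, hcard, rfl⟩
    exact sum_le_of_card_processed e ht hcard

end Processing

theorem stmt1_general (Δ ℓ c : ℕ) (hℓ : ℓ ≤ Δ) (hc : c ≤ ℓ) (j : Fin Δ) :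
    IsGreatest
      { q : ℕ | ∃ t : Fin Δ → ℕ, (∀ w, t w ≤ ℓ) ∧
          (Finset.univ.filter
            (fun w : Fin Δ => ((j : ℕ) + Δ - (w : ℕ)) % Δ < t w)).card = c ∧
          q = ∑ w, t w }
      (Δ * ℓ - ℓ * (ℓ + 1) / 2 + ∑ i ∈ Finset.range c, (ℓ - i)) := by
  have : NeZero Δ := ⟨j.pos.ne'⟩
  have hpos : ∀ w : Fin Δ, ((j : ℕ) + Δ - w) % Δ = (Equiv.subLeft j w : ℕ) := fun w => by
    rw [Equiv.subLeft_apply, Fin.val_sub]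
    congr 1
    omega
  have hvalue : Δ * ℓ - ℓ * (ℓ + 1) / 2 = ∑ p ∈ range Δ, min p ℓ := by
    have := sum_range_min_add_triangle hℓ
    omega
  simp only [hpos, hvalue]
  exact isGreatest_sum_of_card_processed (Equiv.subLeft j) hℓ hc

/-- Cyclic assignment with `Δ` workers each holding the `ℓ ≤ Δ` consecutive symbols
`w, ..., w + ℓ - 1 (mod Δ)`, processed sequentially from position `0`.  A processing pattern is
`t : Fin Δ → ℕ` with `t w ≤ ℓ`, meaning worker `w` has processed its first `t w` symbols;
symbol `j` is processed in worker `w` iff its position `(j - w) mod Δ` is `< t w`.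
The maximum total number of processed symbols such that the fixed symbol `j` is processed
exactly `c` times (`0 ≤ c ≤ ℓ`) is `Δℓ - ℓ(ℓ+1)/2 + Σ_{i=0}^{c-1}(ℓ-i)`, independent of `j`. -/
theorem stmt1 (Δ ℓ c : ℕ) (hΔ : 0 < Δ) (hℓ : ℓ ≤ Δ) (hc : c ≤ ℓ) (j : Fin Δ) :
    IsGreatest
      { q : ℕ | ∃ t : Fin Δ → ℕ, (∀ w, t w ≤ ℓ) ∧
          (Finset.univ.filter
            (fun w : Fin Δ => ((j : ℕ) + Δ - (w : ℕ)) % Δ < t w)).card = c ∧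
          q = ∑ w, t w }
      (Δ * ℓ - ℓ * (ℓ + 1) / 2 + ∑ i ∈ Finset.range c, (ℓ - i)) :=
  stmt1_general Δ ℓ c hℓ hc j
end

section
/- For any ⟨n, ℓ, Δ, r⟩-uncoded system (n workers, each assigned an ordered list of ℓ distinct symbols out of a total of Δ symbols, with each symbol appearing exactly r times across workers, so nℓ = Δr), the worst-case recovery number Q satisfies Q ≥ Δr - (r/2)(ℓ+1) + 1. -/
/-!
Fix a symbol `s` and let each worker process `ℓ` minus the total length of the tails of its list
that start at copies of `s`. Then no worker reaches a copy of `s`, and altogether the pattern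
processes at least `nℓ` minus the total tail length of `s`. Summed over all symbols the tail
lengths give `n · ℓ(ℓ+1)/2 = Δr(ℓ+1)/2`, so some symbol has total tail length at most `r(ℓ+1)/2`,
and its pattern shows `Q - 1 ≥ Δr - r(ℓ+1)/2`.
-/

open Finset

namespace UncodedSystem

variable {n ℓ : ℕ} {α : Type*} [DecidableEq α] (A : Fin n → Fin ℓ → α) (s : α)

def tailLength (w : Fin n) : ℕ := ∑ p with A w p = s, (ℓ - p)

def totalTailLength : ℕ := ∑ w, tailLength A s w

/-- A copy of `s` at position `p` alone contributes `ℓ - p` to `tailLength A s w`, so worker `w`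
stops at or before its first copy of `s`. -/
def stopBefore (w : Fin n) : ℕ := ℓ - tailLength A s w

theorem stopBefore_le (w : Fin n) : stopBefore A s w ≤ ℓ := Nat.sub_le _ _

theorem apply_ne_of_lt_stopBefore {w : Fin n} {p : Fin ℓ} (hp : (p : ℕ) < stopBefore A s w) :
    A w p ≠ s := by
  intro hs
  have : ℓ - p ≤ tailLength A s w :=
    single_le_sum (f := fun q : Fin ℓ => ℓ - (q : ℕ)) (fun _ _ => Nat.zero_le _)
      (mem_filter.2 ⟨mem_univ p, hs⟩)
  have := p.isLt
  unfold stopBefore at hp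
  omega

theorem le_sum_stopBefore_add_totalTailLength :
    n * ℓ ≤ ∑ w, stopBefore A s w + totalTailLength A s := by
  calc n * ℓ = ∑ _w : Fin n, ℓ := by simp
    _ ≤ ∑ w, (stopBefore A s w + tailLength A s w) :=
      sum_le_sum fun w _ => by unfold stopBefore; omega
    _ = _ := sum_add_distrib

theorem two_mul_sum_fin_sub (ℓ : ℕ) : 2 * ∑ p : Fin ℓ, (ℓ - p) = ℓ * (ℓ + 1) := by
  rw [Fin.sum_univ_eq_sum_range (fun p => ℓ - p)]
  induction ℓ with
  | zero => simp
  | succ ℓ ih =>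
    rw [sum_range_succ', mul_add]
    simp only [Nat.add_sub_add_right, Nat.sub_zero, ih]
    ring

variable [Fintype α]

theorem two_mul_sum_totalTailLength :
    2 * ∑ s, totalTailLength A s = n * (ℓ * (ℓ + 1)) := by
  have hworker (w : Fin n) : ∑ s, tailLength A s w = ∑ p : Fin ℓ, (ℓ - p) :=
    sum_fiberwise univ (A w) fun p : Fin ℓ => ℓ - (p : ℕ)
  simp only [totalTailLength]
  rw [sum_comm, sum_congr rfl fun w _ => hworker w, sum_const, card_univ, Fintype.card_fin,
    smul_eq_mul, mul_left_comm, two_mul_sum_fin_sub]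

theorem exists_card_mul_totalTailLength_le [Nonempty α] :
    ∃ s, Fintype.card α * (2 * totalTailLength A s) ≤ n * (ℓ * (ℓ + 1)) := by
  obtain ⟨s, -, hs⟩ := exists_le_of_sum_le univ_nonempty
    (f := fun s => Fintype.card α * (2 * totalTailLength A s))
    (g := fun _ => n * (ℓ * (ℓ + 1))) (by
      rw [← mul_sum, ← mul_sum, two_mul_sum_totalTailLength, sum_const, card_univ, smul_eq_mul])
  exact ⟨s, hs⟩

end UncodedSystem

open UncodedSystem in
theorem stmt2_general (n ℓ Δ r : ℕ) (hΔ : 0 < Δ)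
    (hbal : n * ℓ = Δ * r)
    (A : Fin n → Fin ℓ → Fin Δ)
    (Q : ℕ)
    (hQ : ∀ t : Fin n → ℕ, (∀ w, t w ≤ ℓ) → Q ≤ ∑ w, t w →
      ∀ s : Fin Δ, ∃ w : Fin n, ∃ p : Fin ℓ, A w p = s ∧ (p : ℕ) < t w) :
    (Q : ℚ) ≥ (Δ : ℚ) * r - ((r : ℚ) / 2) * (ℓ + 1) + 1 := by
  have : Nonempty (Fin Δ) := ⟨⟨0, hΔ⟩⟩
  obtain ⟨s, hs⟩ := exists_card_mul_totalTailLength_le A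
  have hmiss : ∑ w, stopBefore A s w < Q := by
    by_contra! h
    obtain ⟨w, p, hp, hlt⟩ := hQ _ (stopBefore_le A s) h s
    exact apply_ne_of_lt_stopBefore A s hlt hp
  have htail : 2 * totalTailLength A s ≤ r * (ℓ + 1) := by
    rw [Fintype.card_fin, ← mul_assoc n, hbal, mul_assoc] at hs
    exact Nat.le_of_mul_le_mul_left hs hΔ
  have hcover := le_sum_stopBefore_add_totalTailLength A s
  rw [hbal] at hcover
  have hmiss' : ((∑ w, stopBefore A s w : ℕ) : ℚ) + 1 ≤ Q := by exact_mod_cast hmiss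
  have hcover' : (Δ : ℚ) * r ≤ ∑ w, stopBefore A s w + totalTailLength A s := by
    exact_mod_cast hcover
  have htail' : 2 * (totalTailLength A s : ℚ) ≤ r * (ℓ + 1) := by exact_mod_cast htail
  linarith

/-- Lower bound `Q ≥ Δr - (r/2)(ℓ+1) + 1` for any `⟨n, ℓ, Δ, r⟩`-uncoded system:
`n` workers each hold an ordered list of `ℓ` distinct symbols out of `Δ`, each symbol appearing
exactly `r` times, `nℓ = Δr`.  `Q` is any number such that every processing pattern (prefix
`t w ≤ ℓ` per worker) with at least `Q` total processed symbols covers every symbol. -/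
theorem stmt2 (n ℓ Δ r : ℕ) (hΔ : 0 < Δ) (hℓ : 0 < ℓ) (hℓΔ : ℓ ≤ Δ) (hr : 0 < r)
    (hbal : n * ℓ = Δ * r)
    (A : Fin n → Fin ℓ → Fin Δ)
    (hinj : ∀ w, Function.Injective (A w))
    (hrep : ∀ s : Fin Δ,
      (Finset.univ.filter (fun wp : Fin n × Fin ℓ => A wp.1 wp.2 = s)).card = r)
    (Q : ℕ)
    (hQ : ∀ t : Fin n → ℕ, (∀ w, t w ≤ ℓ) → Q ≤ ∑ w, t w →
      ∀ s : Fin Δ, ∃ w : Fin n, ∃ p : Fin ℓ, A w p = s ∧ (p : ℕ) < t w) :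
    (Q : ℚ) ≥ (Δ : ℚ) * r - ((r : ℚ) / 2) * (ℓ + 1) + 1 :=
  stmt2_general n ℓ Δ r hΔ hbal A Q hQ
end

section
/- Consider the β-level cyclic coding scheme with n = c·a₂ workers partitioned into c groups of Δ/β = a₂ workers each, using the same parallel class P of Δ/β meta-symbols (blocks of size β on Δ points) in every group, with cyclic assignment of ℓ meta-symbols per worker within each group. If c ≥ β, then any meta-symbol appears in exactly cℓ workers, so the scheme tolerates any s = cℓ - β stragglers: the remaining workers collectively contain at least β copies of each meta-symbol, which suffices (with probability 1 over random linear coefficients) to decode all Δ unknowns. -/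
lemma invol_mod (a m x : ℕ) (ha : 0 < a) (hx : x < a) :
    (m + a - (m + a - x) % a) % a = x := by
  have hmd := Nat.mod_add_div (m + a - x) a
  have hlt := Nat.mod_lt (m + a - x) ha
  have h : m + a - (m + a - x) % a = x + a * ((m + a - x) / a) := by omega
  rw [h, Nat.add_mul_mod_self_left, Nat.mod_eq_of_lt hx]

lemma count_cyclic (a ℓ : ℕ) (ha : 0 < a) (hℓa : ℓ ≤ a) (m : Fin a) :
    (Finset.univ.filter (fun j : Fin a => ((m : ℕ) + a - (j : ℕ)) % a < ℓ)).card = ℓ := by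
  conv_rhs => rw [← Finset.card_range ℓ]
  refine Finset.card_bij' (fun j _ => ((m : ℕ) + a - (j : ℕ)) % a)
    (fun k _ => (⟨((m : ℕ) + a - k) % a, Nat.mod_lt _ ha⟩ : Fin a)) ?_ ?_ ?_ ?_
  · intro j hj
    simp only [Finset.mem_filter, Finset.mem_univ, true_and] at hj
    simpa using hj
  · intro k hk
    simp only [Finset.mem_range] at hk
    simp only [Finset.mem_filter, Finset.mem_univ, true_and]
    rw [invol_mod a (m : ℕ) k ha (lt_of_lt_of_le hk hℓa)]
    exact hk
  · intro j hj
    exact Fin.ext (invol_mod a (m : ℕ) (j : ℕ) ha j.isLt)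
  · intro k hk
    simp only [Finset.mem_range] at hk
    exact invol_mod a (m : ℕ) k ha (lt_of_lt_of_le hk hℓa)

/-- β-level cyclic coding scheme: `n = c·a₂` workers split into `c` groups of `a₂ = Δ/β`
workers, all groups using the same parallel class of `a₂` meta-symbols (blocks of size `β`);
within a group, worker `j` holds meta-symbols `j, ..., j+ℓ-1 (mod a₂)`.  If `c ≥ β` then any
meta-symbol `m` appears in exactly `c·ℓ` workers, and for any set `S` of `cℓ - β` stragglers,
the surviving workers contain at least `β` copies of each meta-symbol (which suffices to
decode all unknowns with probability 1 over random coefficients). -/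
theorem stmt4 (c a₂ ℓ β : ℕ) (ha : 0 < a₂) (hℓ : 0 < ℓ) (hℓa : ℓ ≤ a₂)
    (hβ : 0 < β) (hβc : β ≤ c) :
    ∀ m : Fin a₂,
      (Finset.univ.filter
        (fun w : Fin c × Fin a₂ => ((m : ℕ) + a₂ - (w.2 : ℕ)) % a₂ < ℓ)).card = c * ℓ ∧
      ∀ S : Finset (Fin c × Fin a₂), S.card = c * ℓ - β →
        β ≤ ((Finset.univ \ S).filter
          (fun w : Fin c × Fin a₂ => ((m : ℕ) + a₂ - (w.2 : ℕ)) % a₂ < ℓ)).card := by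
  intro m
  have hcount : (Finset.univ.filter
      (fun w : Fin c × Fin a₂ => ((m : ℕ) + a₂ - (w.2 : ℕ)) % a₂ < ℓ)).card = c * ℓ := by
    have hprod : (Finset.univ.filter
        (fun w : Fin c × Fin a₂ => ((m : ℕ) + a₂ - (w.2 : ℕ)) % a₂ < ℓ)) =
        (Finset.univ : Finset (Fin c)) ×ˢ
          (Finset.univ.filter (fun j : Fin a₂ => ((m : ℕ) + a₂ - (j : ℕ)) % a₂ < ℓ)) := by
      ext ⟨x, y⟩
      simp [Finset.mem_product]
    rw [hprod, Finset.card_product, count_cyclic a₂ ℓ ha hℓa m, Finset.card_univ,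
      Fintype.card_fin]
  refine ⟨hcount, fun S hS => ?_⟩
  have h1 : Finset.univ.filter
      (fun w : Fin c × Fin a₂ => ((m : ℕ) + a₂ - (w.2 : ℕ)) % a₂ < ℓ) \ S ⊆
      (Finset.univ \ S).filter
      (fun w : Fin c × Fin a₂ => ((m : ℕ) + a₂ - (w.2 : ℕ)) % a₂ < ℓ) := by
    intro w hw
    simp only [Finset.mem_sdiff, Finset.mem_filter, Finset.mem_univ, true_and] at hw ⊢
    tauto
  have h2 := Finset.card_le_card h1
  have h3 := Finset.le_card_sdiff S (Finset.univ.filter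
      (fun w : Fin c × Fin a₂ => ((m : ℕ) + a₂ - (w.2 : ℕ)) % a₂ < ℓ))
  have hβcℓ : β ≤ c * ℓ := le_trans hβc (Nat.le_mul_of_pos_right c hℓ)
  omega
end

section
/- In the β-level cyclic coding scheme with c ≥ β groups each using the same parallel class of Δ/β meta-symbols with cyclic assignment of ℓ meta-symbols per worker, the worst-case recovery number is Q = nℓ - cℓ(ℓ+1)/2 + ℓ(β-1) + 1; that is, whenever at least this many meta-symbols (counted with multiplicity, respecting top-to-bottom processing order) have been processed, every meta-symbol has been processed at least β times, and there is a processing pattern of Q-1 symbols in which some meta-symbol is processed only β-1 times. -/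
open Finset

private lemma tri_aux (l : ℕ) : 2 * ∑ p ∈ range l, (l - p) = l * (l + 1) := by
  induction l with
  | zero => simp
  | succ n ih =>
    rw [Finset.sum_range_succ]
    have h : ∑ p ∈ range n, (n + 1 - p) = ∑ p ∈ range n, ((n - p) + 1) := by
      apply Finset.sum_congr rfl
      intro x hx; have := Finset.mem_range.mp hx; omega
    rw [h, Finset.sum_add_distrib, Finset.sum_const, card_range, smul_eq_mul, mul_one]
    have h2 : n + 1 - n = 1 := by omega
    rw [h2]
    nlinarith [ih]

open Fin.NatCast in
private lemma sum_shift {M : Type*} [AddCommMonoid M] (a₂ : ℕ) (m : ℕ) (f : ℕ → M) :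
    ∑ j : Fin a₂, f ((m + a₂ - (j:ℕ)) % a₂) = ∑ p : Fin a₂, f (p:ℕ) := by
  rcases Nat.eq_zero_or_pos a₂ with h | h
  · subst h; simp
  haveI : NeZero a₂ := ⟨h.ne'⟩
  calc ∑ j : Fin a₂, f ((m + a₂ - (j:ℕ)) % a₂)
      = ∑ j : Fin a₂, f (((Equiv.subLeft ((m : ℕ) : Fin a₂)) j : Fin a₂) : ℕ) := by
        apply Finset.sum_congr rfl
        intro j _
        congr 1
        simp only [Equiv.subLeft_apply, Fin.sub_def, Fin.val_natCast]
        have hj : (j:ℕ) < a₂ := j.isLt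
        have h1 : m + a₂ - (j:ℕ) = m + (a₂ - (j:ℕ)) := by omega
        rw [h1, ← Nat.mod_add_mod, Nat.add_comm]
    _ = ∑ p : Fin a₂, f (p:ℕ) :=
        Equiv.sum_comp (Equiv.subLeft ((m : ℕ) : Fin a₂)) (fun p : Fin a₂ => f (p:ℕ))

private lemma filter_range_lt (c k : ℕ) (h : k ≤ c) :
    (range c).filter (fun i => i < k) = range k := by
  ext x; simp only [Finset.mem_filter, Finset.mem_range]; omega

private lemma card_fin_lt (c k : ℕ) (h : k ≤ c) :
    (Finset.univ.filter (fun g : Fin c => (g:ℕ) < k)).card = k := by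
  rw [Finset.card_filter]
  rw [Fin.sum_univ_eq_sum_range (fun i => if i < k then 1 else 0) c]
  rw [← Finset.sum_filter, filter_range_lt c k h]
  simp

/-- Worst-case recovery number of the β-level cyclic coding scheme with `c ≥ β` groups of
`a₂` workers, each worker holding `ℓ` cyclically assigned meta-symbols processed top to
bottom.  With `Q = nℓ - cℓ(ℓ+1)/2 + ℓ(β-1) + 1` (where `n = c·a₂`): every processing pattern
with at least `Q` processed meta-symbols has every meta-symbol processed at least `β` times,
and there is a pattern of `Q - 1` processed meta-symbols in which some meta-symbol is
processed only `β - 1` times. -/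
theorem stmt5 (c a₂ ℓ β : ℕ) (ha : 0 < a₂) (hℓ : 0 < ℓ) (hℓa : ℓ ≤ a₂)
    (hβ : 0 < β) (hβc : β ≤ c) :
    (∀ t : Fin c × Fin a₂ → ℕ, (∀ w, t w ≤ ℓ) →
      c * a₂ * ℓ - c * (ℓ * (ℓ + 1) / 2) + ℓ * (β - 1) + 1 ≤ ∑ w, t w →
      ∀ m : Fin a₂, β ≤ (Finset.univ.filter
        (fun w : Fin c × Fin a₂ => ((m : ℕ) + a₂ - (w.2 : ℕ)) % a₂ < t w)).card) ∧
    (∃ t : Fin c × Fin a₂ → ℕ, (∀ w, t w ≤ ℓ) ∧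
      ∑ w, t w = c * a₂ * ℓ - c * (ℓ * (ℓ + 1) / 2) + ℓ * (β - 1) ∧
      ∃ m : Fin a₂, (Finset.univ.filter
        (fun w : Fin c × Fin a₂ => ((m : ℕ) + a₂ - (w.2 : ℕ)) % a₂ < t w)).card = β - 1) := by
  have hT2 : 2 * (ℓ * (ℓ + 1) / 2) = ℓ * ℓ + ℓ := by
    have hdvd : 2 ∣ ℓ * (ℓ + 1) := (Nat.even_mul_succ_self ℓ).two_dvd
    rw [Nat.mul_div_cancel' hdvd]; ring
  have hTle : c * (ℓ * (ℓ + 1) / 2) ≤ c * a₂ * ℓ := by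
    rw [mul_assoc]
    apply Nat.mul_le_mul_left
    have h2 : ℓ * ℓ ≤ a₂ * ℓ := Nat.mul_le_mul_right ℓ hℓa
    have h3 : ℓ ≤ a₂ * ℓ := Nat.le_mul_of_pos_left ℓ ha
    omega
  constructor
  · -- Part 1
    intro t ht hsum m
    by_contra hcon
    push_neg at hcon
    set F := Finset.univ.filter
        (fun w : Fin c × Fin a₂ => ((m : ℕ) + a₂ - (w.2 : ℕ)) % a₂ < t w) with hF
    have key : ∀ w : Fin c × Fin a₂,
        t w + (if ((m:ℕ) + a₂ - (w.2:ℕ)) % a₂ < ℓ then ℓ - ((m:ℕ) + a₂ - (w.2:ℕ)) % a₂ else 0)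
        ≤ ℓ + (if ((m:ℕ) + a₂ - (w.2:ℕ)) % a₂ < t w then ℓ else 0) := by
      intro w
      have h0 := ht w
      by_cases h1 : ((m:ℕ) + a₂ - (w.2:ℕ)) % a₂ < ℓ <;>
        by_cases h2 : ((m:ℕ) + a₂ - (w.2:ℕ)) % a₂ < t w <;>
        simp only [h1, h2, if_true, if_false, if_pos, if_neg, not_false_iff] <;> omega
    have hsumle := Finset.sum_le_sum (s := (Finset.univ : Finset (Fin c × Fin a₂))) (fun w _ => key w)
    rw [Finset.sum_add_distrib, Finset.sum_add_distrib] at hsumle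
    have hA : ∑ w : Fin c × Fin a₂,
        (if ((m:ℕ) + a₂ - (w.2:ℕ)) % a₂ < ℓ then ℓ - ((m:ℕ) + a₂ - (w.2:ℕ)) % a₂ else 0)
        = c * (ℓ * (ℓ + 1) / 2) := by
      rw [Fintype.sum_prod_type]
      have inner : ∀ g : Fin c, ∑ j : Fin a₂,
          (if ((m:ℕ) + a₂ - (j:ℕ)) % a₂ < ℓ then ℓ - ((m:ℕ) + a₂ - (j:ℕ)) % a₂ else 0)
          = ℓ * (ℓ + 1) / 2 := by
        intro g
        rw [sum_shift a₂ (m:ℕ) (fun x => if x < ℓ then ℓ - x else 0)]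
        rw [Fin.sum_univ_eq_sum_range (fun p => if p < ℓ then ℓ - p else 0) a₂]
        rw [← Finset.sum_filter, filter_range_lt a₂ ℓ hℓa]
        have := tri_aux ℓ
        omega
      rw [Finset.sum_congr rfl (fun g _ => inner g), Finset.sum_const, card_univ,
        Fintype.card_fin, smul_eq_mul]
    have hB : ∑ w : Fin c × Fin a₂,
        (if ((m:ℕ) + a₂ - (w.2:ℕ)) % a₂ < t w then ℓ else 0) = F.card * ℓ := by
      rw [← Finset.sum_filter, Finset.sum_const, smul_eq_mul]
    have hC : ∑ _w : Fin c × Fin a₂, ℓ = c * a₂ * ℓ := by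
      rw [Finset.sum_const, card_univ, Fintype.card_prod, Fintype.card_fin, Fintype.card_fin,
        smul_eq_mul, mul_assoc]
    rw [hA, hB, hC] at hsumle
    have hFle : F.card * ℓ ≤ (β - 1) * ℓ := Nat.mul_le_mul_right ℓ (by omega)
    have hcomm : ℓ * (β - 1) = (β - 1) * ℓ := mul_comm _ _
    omega
  · -- Part 2
    refine ⟨fun w => if ((0:ℕ) + a₂ - (w.2:ℕ)) % a₂ < ℓ then
        (if (w.2:ℕ) = 0 ∧ (w.1:ℕ) < β - 1 then ℓ else ((0:ℕ) + a₂ - (w.2:ℕ)) % a₂) else ℓ,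
      ?_, ?_, ⟨0, ha⟩, ?_⟩
    · intro w
      dsimp only
      split_ifs <;> omega
    · -- sum computation
      have hptw : ∀ w : Fin c × Fin a₂,
          (if ((0:ℕ) + a₂ - (w.2:ℕ)) % a₂ < ℓ then
            (if (w.2:ℕ) = 0 ∧ (w.1:ℕ) < β - 1 then ℓ else ((0:ℕ) + a₂ - (w.2:ℕ)) % a₂) else ℓ)
          = (if ((0:ℕ) + a₂ - (w.2:ℕ)) % a₂ < ℓ then ((0:ℕ) + a₂ - (w.2:ℕ)) % a₂ else ℓ)
            + (if (w.2:ℕ) = 0 ∧ (w.1:ℕ) < β - 1 then ℓ else 0) := by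
        intro w
        by_cases h2 : (w.2:ℕ) = 0 ∧ (w.1:ℕ) < β - 1
        · have hj : (w.2:ℕ) = 0 := h2.1
          have hp : ((0:ℕ) + a₂ - (w.2:ℕ)) % a₂ = 0 := by
            rw [hj]; simp [Nat.mod_self]
          rw [hp]
          simp [h2, hℓ]
        · simp only [h2, if_false]
          by_cases h1 : ((0:ℕ) + a₂ - (w.2:ℕ)) % a₂ < ℓ <;> simp [h1]
      rw [Finset.sum_congr rfl (fun w _ => hptw w), Finset.sum_add_distrib]
      have hbase : ∑ w : Fin c × Fin a₂,
          (if ((0:ℕ) + a₂ - (w.2:ℕ)) % a₂ < ℓ then ((0:ℕ) + a₂ - (w.2:ℕ)) % a₂ else ℓ)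
          = c * ((∑ p ∈ range ℓ, p) + (a₂ - ℓ) * ℓ) := by
        rw [Fintype.sum_prod_type]
        have inner : ∀ g : Fin c, ∑ j : Fin a₂,
            (if ((0:ℕ) + a₂ - (j:ℕ)) % a₂ < ℓ then ((0:ℕ) + a₂ - (j:ℕ)) % a₂ else ℓ)
            = (∑ p ∈ range ℓ, p) + (a₂ - ℓ) * ℓ := by
          intro g
          rw [sum_shift a₂ 0 (fun x => if x < ℓ then x else ℓ)]
          rw [Fin.sum_univ_eq_sum_range (fun p => if p < ℓ then p else ℓ) a₂]
          rw [Finset.sum_ite, filter_range_lt a₂ ℓ hℓa]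
          have hcard : (Finset.filter (fun x => ¬ x < ℓ) (range a₂)).card = a₂ - ℓ := by
            rw [Finset.filter_not, filter_range_lt a₂ ℓ hℓa,
              Finset.card_sdiff_of_subset (Finset.range_subset_range.mpr hℓa),
              Finset.card_range, Finset.card_range]
          rw [Finset.sum_const, hcard, smul_eq_mul]
        rw [Finset.sum_congr rfl (fun g _ => inner g), Finset.sum_const, card_univ,
          Fintype.card_fin, smul_eq_mul]
      have hextra : ∑ w : Fin c × Fin a₂,
          (if (w.2:ℕ) = 0 ∧ (w.1:ℕ) < β - 1 then ℓ else 0) = (β - 1) * ℓ := by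
        rw [Fintype.sum_prod_type]
        have inner : ∀ g : Fin c, ∑ j : Fin a₂,
            (if (j:ℕ) = 0 ∧ (g:ℕ) < β - 1 then ℓ else 0)
            = (if (g:ℕ) < β - 1 then ℓ else 0) := by
          intro g
          by_cases hg : (g:ℕ) < β - 1
          · simp only [hg, and_true, if_true]
            rw [Fin.sum_univ_eq_sum_range (fun i => if i = 0 then ℓ else 0) a₂]
            rw [Finset.sum_ite_eq' (range a₂) 0 (fun _ => ℓ)]
            simp [Finset.mem_range, ha]
          · simp [hg]
        rw [Finset.sum_congr rfl (fun g _ => inner g)]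
        rw [Fin.sum_univ_eq_sum_range (fun i => if i < β - 1 then ℓ else 0) c]
        rw [← Finset.sum_filter, filter_range_lt c (β - 1) (by omega), Finset.sum_const,
          Finset.card_range, smul_eq_mul]
      rw [hbase, hextra]
      -- arithmetic
      have g1 : (∑ p ∈ range ℓ, p) * 2 = ℓ * (ℓ - 1) := Finset.sum_range_id_mul_two ℓ
      have g2 : ℓ * (ℓ - 1) + ℓ = ℓ * ℓ := by
        cases ℓ with
        | zero => simp
        | succ k => simp only [Nat.succ_sub_one]; ring
      have g3 : (a₂ - ℓ) * ℓ = a₂ * ℓ - ℓ * ℓ := Nat.sub_mul a₂ ℓ ℓ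
      have g4 : ℓ * ℓ ≤ a₂ * ℓ := Nat.mul_le_mul_right ℓ hℓa
      have g5 : (∑ p ∈ range ℓ, p) + (a₂ - ℓ) * ℓ = a₂ * ℓ - ℓ * (ℓ + 1) / 2 := by omega
      rw [g5]
      have g6 : c * (a₂ * ℓ - ℓ * (ℓ + 1) / 2) = c * (a₂ * ℓ) - c * (ℓ * (ℓ + 1) / 2) := by
        rw [mul_comm c _, Nat.sub_mul, mul_comm _ c, mul_comm _ c]
      rw [g6, ← mul_assoc, mul_comm (β - 1) ℓ]
    · -- card computation
      have hset : (Finset.univ.filter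
          (fun w : Fin c × Fin a₂ => (((⟨0, ha⟩ : Fin a₂) : ℕ) + a₂ - (w.2 : ℕ)) % a₂ <
            (if ((0:ℕ) + a₂ - (w.2:ℕ)) % a₂ < ℓ then
              (if (w.2:ℕ) = 0 ∧ (w.1:ℕ) < β - 1 then ℓ else ((0:ℕ) + a₂ - (w.2:ℕ)) % a₂) else ℓ)))
          = Finset.univ.filter (fun w : Fin c × Fin a₂ => (w.2:ℕ) = 0 ∧ (w.1:ℕ) < β - 1) := by
        apply Finset.filter_congr
        intro w _
        simp only [Fin.val_mk]
        by_cases hj : (w.2:ℕ) = 0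
        · have hp : ((0:ℕ) + a₂ - (w.2:ℕ)) % a₂ = 0 := by rw [hj]; simp [Nat.mod_self]
          rw [hp]
          by_cases hg : (w.1:ℕ) < β - 1
          · simp [hj, hg, hℓ]
          · simp [hj, hg]
        · have hp : ((0:ℕ) + a₂ - (w.2:ℕ)) % a₂ = a₂ - (w.2:ℕ) := by
            have := w.2.isLt
            rw [Nat.zero_add, Nat.mod_eq_of_lt (by omega)]
          rw [hp]
          have hj2 : ¬((w.2:ℕ) = 0 ∧ (w.1:ℕ) < β - 1) := fun h => hj h.1
          simp only [hj2, if_false, iff_false, not_lt]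
          split <;> omega
      rw [hset, Finset.card_filter, Fintype.sum_prod_type]
      have inner : ∀ g : Fin c, (∑ j : Fin a₂,
          if (j:ℕ) = 0 ∧ (g:ℕ) < β - 1 then 1 else 0)
          = (if (g:ℕ) < β - 1 then 1 else 0) := by
        intro g
        by_cases hg : (g:ℕ) < β - 1
        · simp only [hg, and_true, if_true]
          rw [Fin.sum_univ_eq_sum_range (fun i => if i = 0 then 1 else 0) a₂]
          rw [Finset.sum_ite_eq' (range a₂) 0 (fun _ => 1)]
          simp [Finset.mem_range, ha]
        · simp [hg]
      rw [Finset.sum_congr rfl (fun g _ => inner g)]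
      rw [Fin.sum_univ_eq_sum_range (fun i => if i < β - 1 then 1 else 0) c]
      rw [← Finset.sum_filter, filter_range_lt c (β - 1) (by omega)]
      simp
end

section
/- For β-level coding with n = c·a₂ workers, storage fraction γ = a₁/a₂, c ≥ β, and c·a₁ ≥ 2: the ratio Q/Δ for the β-level scheme (with Δ_β = β·a₂, ℓ = β·a₁, Q_β = nℓ - cℓ(ℓ+1)/2 + ℓ(β-1) + 1) is strictly smaller than the ratio for the uncoded scheme (β = 1, Δ_unc = a₂, ℓ = a₁, Q_unc = na₁ - ca₁(a₁+1)/2 + 1); specifically Q_unc/Δ_unc − Q_β/Δ_β = (β−1)·(γ(c·a₁/2 − 1) + 1/(β·a₂)) > 0 when c·a₁ > 2. -/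
/-- Comparison of `Q/Δ` for β-level coding (`Δ_β = βa₂`, `ℓ = βa₁`) versus the uncoded scheme
(`Δ_unc = a₂`, `ℓ = a₁`), with `n = c·a₂` workers, storage fraction `γ = a₁/a₂`, `c ≥ β ≥ 2`
and `c·a₁ ≥ 2`: the difference equals `(β−1)(γ(c a₁/2 − 1) + 1/(βa₂))` and is positive, so the
β-level ratio is strictly smaller. -/
theorem stmt6 (a₁ a₂ c β : ℕ) (h1 : 0 < a₁) (h2 : a₁ ≤ a₂) (hβ : 2 ≤ β) (hc : β ≤ c)
    (hca : 2 ≤ c * a₁) :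
    let γ : ℚ := a₁ / a₂
    let n : ℚ := c * a₂
    let Qunc : ℚ := n * a₁ - (c : ℚ) * (a₁ * (a₁ + 1)) / 2 + 1
    let Qβ : ℚ := n * (β * a₁) - (c : ℚ) * ((β * a₁) * (β * a₁ + 1)) / 2
      + (β * a₁ : ℚ) * (β - 1) + 1
    Qunc / a₂ - Qβ / (β * a₂) = ((β : ℚ) - 1) * (γ * ((c : ℚ) * a₁ / 2 - 1) + 1 / (β * a₂)) ∧
    0 < Qunc / a₂ - Qβ / (β * a₂) := by
  intro γ n Qunc Qβ
  have ha2 : (0:ℚ) < a₂ := by exact_mod_cast h1.trans_le h2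
  have hb : (0:ℚ) < β := by positivity
  have heq : Qunc / a₂ - Qβ / (β * a₂)
      = ((β : ℚ) - 1) * (γ * ((c : ℚ) * a₁ / 2 - 1) + 1 / (β * a₂)) := by
    simp only [Qunc, Qβ, n, γ]
    field_simp
    ring
  refine ⟨heq, heq ▸ ?_⟩
  have hβ1 : (0:ℚ) < (β : ℚ) - 1 := by
    have : (2:ℚ) ≤ β := by exact_mod_cast hβ
    linarith
  have hca' : (2:ℚ) ≤ (c : ℚ) * a₁ := by exact_mod_cast hca
  have h1' : (0:ℚ) ≤ γ * ((c : ℚ) * a₁ / 2 - 1) := by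
    have : (0:ℚ) ≤ γ := by positivity
    nlinarith
  have h2' : (0:ℚ) < 1 / ((β:ℚ) * a₂) := by positivity
  nlinarith
end

section
/- Let G be a bipartite graph between Δ unknowns and a set of equations (symbols) where every equation has degree exactly β (involves exactly β unknowns with generic coefficients). If every unknown has degree at least 1 and at least Δ-1 of the unknowns have degree at least β, then G admits a matching saturating all Δ unknowns; consequently, Hall's condition Σ ℓ_i > β(d-1) holds for every set of d unknowns with degrees ℓ_0, ..., ℓ_{d-1}. -/
/-!
Double counting the edges at a set `S` of unknowns gives `∑_{u ∈ S} ℓ_u ≤ β · |N(S)|`. On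
the other hand all unknowns of `S` but at most one have degree `≥ β` and that one has degree
`≥ 1`, so `∑_{u ∈ S} ℓ_u ≥ 1 + β (|S| - 1)`. Hence `|N(S)| > |S| - 1`, which is Hall's condition.
-/

open Finset

section DegreeSum

variable {ι : Type*} {W : Finset ι} {f : ι → ℕ} {β : ℕ}

theorem exists_forall_ne_le_of_card_filter_lt_le_one (hW : W.Nonempty)
    (hlow : #{u ∈ W | f u < β} ≤ 1) : ∃ v ∈ W, ∀ u ∈ W, u ≠ v → β ≤ f u := by
  by_contra! h
  obtain ⟨v₀, hv₀⟩ := hW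
  obtain ⟨u, hu, -, hfu⟩ := h v₀ hv₀
  obtain ⟨u', hu', hne, hfu'⟩ := h u hu
  exact hne <| card_le_one.mp hlow u' (mem_filter.mpr ⟨hu', hfu'⟩) u
    (mem_filter.mpr ⟨hu, hfu⟩)

theorem mul_card_sub_one_lt_sum_of_card_filter_lt_le_one (hW : W.Nonempty)
    (hpos : ∀ u ∈ W, 1 ≤ f u) (hlow : #{u ∈ W | f u < β} ≤ 1) :
    β * (#W - 1) < ∑ u ∈ W, f u := by
  classical
  obtain ⟨v, hv, hle⟩ := exists_forall_ne_le_of_card_filter_lt_le_one hW hlow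
  calc β * (#W - 1) = ∑ _u ∈ W.erase v, β := by
        rw [sum_const, card_erase_of_mem hv, smul_eq_mul, mul_comm]
    _ ≤ ∑ u ∈ W.erase v, f u :=
        sum_le_sum fun u hu => hle u (mem_of_mem_erase hu) (ne_of_mem_erase hu)
    _ < f v + ∑ u ∈ W.erase v, f u := Nat.lt_add_of_pos_left (hpos v hv)
    _ = ∑ u ∈ W, f u := add_sum_erase W f hv

end DegreeSum

section Matching

variable {α E : Type*} [Fintype E] [DecidableEq α] (R : E → Finset α)

theorem sum_card_filter_mem_le_mul_card_biUnion [DecidableEq E] {β : ℕ}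
    (hsize : ∀ e, #(R e) ≤ β) (S : Finset α) :
    ∑ u ∈ S, #{e | u ∈ R e} ≤ β * #(S.biUnion fun u => {e | u ∈ R e}) := by
  set N := S.biUnion fun u => ({e | u ∈ R e} : Finset E)
  have hAbove : ∀ u ∈ S,
      N.bipartiteAbove (fun u e => u ∈ R e) u = ({e | u ∈ R e} : Finset E) := by
    intro u hu
    ext e
    rw [mem_bipartiteAbove, mem_filter_univ]
    exact ⟨And.right, fun he => ⟨mem_biUnion.mpr ⟨u, hu, (mem_filter_univ e).mpr he⟩, he⟩⟩
  calc ∑ u ∈ S, #{e | u ∈ R e}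
      = ∑ u ∈ S, #(N.bipartiteAbove (fun u e => u ∈ R e) u) :=
        sum_congr rfl fun u hu => by rw [hAbove u hu]
    _ = ∑ e ∈ N, #(S.bipartiteBelow (fun u e => u ∈ R e) e) :=
        sum_card_bipartiteAbove_eq_sum_card_bipartiteBelow _
    _ ≤ ∑ _e ∈ N, β := sum_le_sum fun e _ =>
        (card_le_card fun _ hu => ((mem_bipartiteBelow fun u e => u ∈ R e).mp hu).2).trans
          (hsize e)
    _ = β * #N := by rw [sum_const, smul_eq_mul, mul_comm]

theorem exists_injective_mem_of_mul_card_sub_one_lt_sum [Finite α] {β : ℕ}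
    (hsize : ∀ e, #(R e) ≤ β)
    (hsum : ∀ S : Finset α, S.Nonempty → β * (#S - 1) < ∑ u ∈ S, #{e | u ∈ R e}) :
    ∃ f : α → E, Function.Injective f ∧ ∀ u, u ∈ R (f u) := by
  classical
  have hall : ∀ S : Finset α, #S ≤ #(S.biUnion fun u => ({e | u ∈ R e} : Finset E)) := by
    intro S
    rcases S.eq_empty_or_nonempty with rfl | hS
    · simp
    have := lt_of_mul_lt_mul_left <|
      (hsum S hS).trans_le (sum_card_filter_mem_le_mul_card_biUnion R hsize S)
    omega
  obtain ⟨f, hf, hmem⟩ := (all_card_le_biUnion_card_iff_existsInjective' _).mp hall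
  exact ⟨f, hf, fun u => (mem_filter.mp (hmem u)).2⟩

end Matching

theorem stmt7_general {E : Type*} [Fintype E] (Δ β : ℕ)
    (R : E → Finset (Fin Δ)) (hsize : ∀ e, (R e).card = β)
    (deg : Fin Δ → ℕ)
    (hdeg : ∀ u, deg u = (Finset.univ.filter (fun e : E => u ∈ R e)).card)
    (h1 : ∀ u, 1 ≤ deg u)
    (h2 : Δ - 1 ≤ (Finset.univ.filter (fun u : Fin Δ => β ≤ deg u)).card) :
    (∃ f : Fin Δ → E, Function.Injective f ∧ ∀ u, u ∈ R (f u)) ∧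
    ∀ W : Finset (Fin Δ), W.Nonempty → β * (W.card - 1) < ∑ u ∈ W, deg u := by
  have hlow : #{u | deg u < β} ≤ 1 := by
    have := card_filter_add_card_filter_not (s := univ) (fun u : Fin Δ => β ≤ deg u)
    simp only [card_univ, Fintype.card_fin, not_le] at this
    omega
  have hall (W : Finset (Fin Δ)) (hW : W.Nonempty) : β * (#W - 1) < ∑ u ∈ W, deg u :=
    mul_card_sub_one_lt_sum_of_card_filter_lt_le_one hW (fun u _ => h1 u)
      ((card_le_card (filter_subset_filter _ (subset_univ W))).trans hlow)
  refine ⟨exists_injective_mem_of_mul_card_sub_one_lt_sum R (fun e => (hsize e).le) ?_, hall⟩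
  simpa only [← hdeg] using hall

/-- Bipartite decoding graph between `Δ` unknowns and equations, where every equation involves
exactly `β` unknowns (generic coefficients).  If every unknown has degree at least `1` and at
least `Δ - 1` unknowns have degree at least `β`, then there is a matching saturating all
unknowns; consequently Hall's condition `Σ ℓᵢ > β(d-1)` holds for every nonempty set of `d`
unknowns with degrees `ℓ₀, ..., ℓ_{d-1}`. -/
theorem stmt7 {E : Type*} [Fintype E] [DecidableEq E] (Δ β : ℕ) (hβ : 0 < β) (hΔ : 0 < Δ)
    (R : E → Finset (Fin Δ)) (hsize : ∀ e, (R e).card = β)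
    (deg : Fin Δ → ℕ)
    (hdeg : ∀ u, deg u = (Finset.univ.filter (fun e : E => u ∈ R e)).card)
    (h1 : ∀ u, 1 ≤ deg u)
    (h2 : Δ - 1 ≤ (Finset.univ.filter (fun u : Fin Δ => β ≤ deg u)).card) :
    (∃ f : Fin Δ → E, Function.Injective f ∧ ∀ u, u ∈ R (f u)) ∧
    ∀ W : Finset (Fin Δ), W.Nonempty → β * (W.card - 1) < ∑ u ∈ W, deg u :=
  stmt7_general Δ β R hsize deg hdeg h1 h2
end

section
/- In the β-level matrix-matrix cyclic scheme (Algorithm 2) within a single group of Δ/β workers arranged as Δ_B/β_B subgroups of Δ_A/β_A workers each, every product meta-symbol x ⊗ y (x in the A-parallel-class, y in the B-parallel-class) appears exactly ℓ = ℓ_A ℓ_B times in the group, and these appearances occupy all positions 0, 1, ..., ℓ-1 in the within-worker processing order exactly once. -/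
lemma aux_inv (n a b : ℕ) (hn : 0 < n) (ha : a < n) (hb : b < n) :
    (a + n - (a + n - b) % n) % n = b := by
  have h1 : (a + n - b) % n = if b ≤ a then a - b else a + n - b := by
    split
    · have h : a + n - b = (a - b) + n := by omega
      rw [h, Nat.add_mod_right, Nat.mod_eq_of_lt (by omega)]
    · exact Nat.mod_eq_of_lt (by omega)
  rw [h1]
  split
  · have h : a + n - (a - b) = b + n := by omega
    rw [h, Nat.add_mod_right, Nat.mod_eq_of_lt hb]
  · have h : a + n - (a + n - b) = b := by omega
    rw [h, Nat.mod_eq_of_lt hb]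

lemma div_key (q s m : ℕ) (hm : 0 < m) (hs : s < m) : (q * m + s) / m = q := by
  rw [add_comm, Nat.add_mul_div_right _ _ hm, Nat.div_eq_of_lt hs, zero_add]

lemma mod_key (q s m : ℕ) (hs : s < m) : (q * m + s) % m = s := by
  rw [add_comm, Nat.add_mul_mod_self_right, Nat.mod_eq_of_lt hs]

lemma aux_inj (n a : ℕ) (hn : 0 < n) (ha : a < n) {i i' : ℕ} (hi : i < n) (hi' : i' < n)
    (h : (a + n - i) % n = (a + n - i') % n) : i = i' := by
  have h1 := aux_inv n a i hn ha hi
  have h2 := aux_inv n a i' hn ha hi'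
  rw [← h1, ← h2, h]

/-- Position lemma for one group of the β-level matrix-matrix cyclic scheme: the group has
`nB = ΔB/βB` subgroups (indexed by `w.1`) of `nA = ΔA/βA` workers (indexed by `w.2`); worker
`(j, i)` holds A-meta-symbols `i, ..., i+ℓA-1 (mod nA)` and B-meta-symbols
`j, ..., j+ℓB-1 (mod nB)`, and the product at A-position `i₁` and B-position `j₁` sits at
position `i₁·ℓB + j₁`.  Every product meta-symbol `x ⊗ y` appears in exactly `ℓ = ℓA·ℓB`
workers of the group, and its appearances occupy each position `0, ..., ℓ-1` exactly once. -/
theorem stmt12 (nA nB ℓA ℓB : ℕ) (hA : 0 < nA) (hB : 0 < nB)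
    (hℓA : 0 < ℓA) (hℓB : 0 < ℓB) (hA' : ℓA ≤ nA) (hB' : ℓB ≤ nB)
    (x : Fin nA) (y : Fin nB) :
    (Finset.univ.filter (fun w : Fin nB × Fin nA =>
      ((x : ℕ) + nA - (w.2 : ℕ)) % nA < ℓA ∧
      ((y : ℕ) + nB - (w.1 : ℕ)) % nB < ℓB)).card = ℓA * ℓB ∧
    ∀ p < ℓA * ℓB, ∃! w : Fin nB × Fin nA,
      ((x : ℕ) + nA - (w.2 : ℕ)) % nA < ℓA ∧
      ((y : ℕ) + nB - (w.1 : ℕ)) % nB < ℓB ∧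
      (((x : ℕ) + nA - (w.2 : ℕ)) % nA) * ℓB + ((y : ℕ) + nB - (w.1 : ℕ)) % nB = p := by
  constructor
  · rw [show ℓA * ℓB = (Finset.univ : Finset (Fin ℓA × Fin ℓB)).card by
      simp [Finset.card_univ, mul_comm]]
    refine Finset.card_bij'
      (fun w hw => (⟨((x : ℕ) + nA - (w.2 : ℕ)) % nA,
          (Finset.mem_filter.mp hw).2.1⟩,
        ⟨((y : ℕ) + nB - (w.1 : ℕ)) % nB, (Finset.mem_filter.mp hw).2.2⟩))
      (fun r _ => (⟨((y : ℕ) + nB - (r.2 : ℕ)) % nB, Nat.mod_lt _ hB⟩,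
        ⟨((x : ℕ) + nA - (r.1 : ℕ)) % nA, Nat.mod_lt _ hA⟩)) ?_ ?_ ?_ ?_
    · intro a ha; exact Finset.mem_univ _
    · intro r hr
      simp only [Finset.mem_filter, Finset.mem_univ, true_and]
      constructor
      · rw [aux_inv nA x r.1 hA x.isLt (lt_of_lt_of_le r.1.isLt hA')]
        exact r.1.isLt
      · rw [aux_inv nB y r.2 hB y.isLt (lt_of_lt_of_le r.2.isLt hB')]
        exact r.2.isLt
    · intro a ha
      have e1 := aux_inv nB y a.1 hB y.isLt a.1.isLt
      have e2 := aux_inv nA x a.2 hA x.isLt a.2.isLt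
      exact Prod.ext (Fin.ext e1) (Fin.ext e2)
    · intro r hr
      have e1 := aux_inv nA x r.1 hA x.isLt (lt_of_lt_of_le r.1.isLt hA')
      have e2 := aux_inv nB y r.2 hB y.isLt (lt_of_lt_of_le r.2.isLt hB')
      exact Prod.ext (Fin.ext e1) (Fin.ext e2)
  · intro p hp
    set rA := p / ℓB with hrA
    set rB := p % ℓB with hrB
    have hrAlt : rA < ℓA := Nat.div_lt_of_lt_mul (by rwa [mul_comm] at hp)
    have hrBlt : rB < ℓB := Nat.mod_lt _ hℓB
    refine ⟨(⟨((y : ℕ) + nB - rB) % nB, Nat.mod_lt _ hB⟩,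
      ⟨((x : ℕ) + nA - rA) % nA, Nat.mod_lt _ hA⟩), ?_, ?_⟩
    · have eA : ((x : ℕ) + nA - (((x : ℕ) + nA - rA) % nA)) % nA = rA :=
        aux_inv nA x rA hA x.isLt (lt_of_lt_of_le hrAlt hA')
      have eB : ((y : ℕ) + nB - (((y : ℕ) + nB - rB) % nB)) % nB = rB :=
        aux_inv nB y rB hB y.isLt (lt_of_lt_of_le hrBlt hB')
      refine ⟨by rw [eA]; exact hrAlt, by rw [eB]; exact hrBlt, ?_⟩
      rw [eA, eB]
      exact Nat.div_add_mod' p ℓB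
    · rintro ⟨j, i⟩ ⟨h1, h2, h3⟩
      simp only at h1 h2 h3
      have hdiv : ((x : ℕ) + nA - (i : ℕ)) % nA = rA := by
        rw [hrA, ← h3, div_key _ _ _ hℓB h2]
      have hmod : ((y : ℕ) + nB - (j : ℕ)) % nB = rB := by
        rw [hrB, ← h3, mod_key _ _ _ h2]
      have hAi : (i : ℕ) = ((x : ℕ) + nA - rA) % nA := by
        rw [← hdiv, aux_inv nA x i hA x.isLt i.isLt]
      have hBj : (j : ℕ) = ((y : ℕ) + nB - rB) % nB := by
        rw [← hmod, aux_inv nB y j hB y.isLt j.isLt]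
      exact Prod.ext (Fin.ext hBj) (Fin.ext hAi)
end

section
/- The β-level matrix-matrix cyclic scheme using a single parallel class for A and a single parallel class for B across all c worker groups, with ℓ = ℓ_Aℓ_B products per worker and β = β_Aβ_B ≤ c, tolerates s = cℓ - β stragglers and has worst-case recovery number Q = nℓ - cℓ(ℓ+1)/2 + ℓ(β-1) + 1. -/
lemma aux_inv_s13 (n x i : ℕ) (hn : 0 < n) (hi : i < n) :
    (x + n - (x + n - i) % n) % n = i := by
  have h2 := Nat.div_add_mod (x + n - i) n
  have h4 : n * ((x + n - i) / n) + (x + n - i) % n + i = x + n := by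
    rw [h2]; exact Nat.sub_add_cancel (by omega)
  have h3 : x + n - (x + n - i) % n = i + n * ((x + n - i) / n) := by
    generalize n * ((x + n - i) / n) = Q at h4 ⊢
    generalize (x + n - i) % n = R at h4 ⊢
    omega
  rw [h3, Nat.add_mul_mod_self_left, Nat.mod_eq_of_lt hi]

lemma aux_card (n L x : ℕ) (hn : 0 < n) (hL : L ≤ n) :
    (Finset.univ.filter (fun i : Fin n => (x + n - (i : ℕ)) % n < L)).card = L := by
  have h := Finset.card_nbij' (s := Finset.univ.filter (fun i : Fin n => (x + n - (i : ℕ)) % n < L))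
    (t := Finset.range L) (fun i => (x + n - (i : ℕ)) % n)
    (fun k => ⟨(x + n - k) % n, Nat.mod_lt _ hn⟩)
    (fun a ha => by simpa using (Finset.mem_filter.mp ha).2)
    (fun k hk => by
      simp only [Finset.mem_coe, Finset.mem_filter, Finset.mem_univ, true_and]
      rw [aux_inv_s13 n x k hn (lt_of_lt_of_le (Finset.mem_range.mp hk) hL)]
      exact Finset.mem_range.mp hk)
    (fun a ha => by
      apply Fin.ext
      simpa using aux_inv_s13 n x (a : ℕ) hn a.isLt)
    (fun k hk => aux_inv_s13 n x k hn (lt_of_lt_of_le (Finset.mem_range.mp hk) hL))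
  rw [Finset.card_range] at h
  exact h

lemma aux_sum (n L x : ℕ) (hn : 0 < n) (hL : L ≤ n) :
    ∑ i ∈ Finset.univ.filter (fun i : Fin n => (x + n - (i : ℕ)) % n < L),
      (x + n - (i : ℕ)) % n = ∑ k ∈ Finset.range L, k := by
  exact Finset.sum_nbij' (fun i => (x + n - (i : ℕ)) % n)
    (fun k => ⟨(x + n - k) % n, Nat.mod_lt _ hn⟩)
    (fun a ha => by simpa using (Finset.mem_filter.mp ha).2)
    (fun k hk => by
      simp only [Finset.mem_filter, Finset.mem_univ, true_and]
      rw [aux_inv_s13 n x k hn (lt_of_lt_of_le (Finset.mem_range.mp hk) hL)]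
      exact Finset.mem_range.mp hk)
    (fun a ha => by
      apply Fin.ext
      simpa using aux_inv_s13 n x (a : ℕ) hn a.isLt)
    (fun k hk => aux_inv_s13 n x k hn (lt_of_lt_of_le (Finset.mem_range.mp hk) hL))
    (fun a ha => rfl)

lemma aux_group (nA nB LA LB x y : ℕ) (hA : 0 < nA) (hB : 0 < nB)
    (hLA : LA ≤ nA) (hLB : LB ≤ nB) :
    ((Finset.univ.filter (fun p : Fin nB × Fin nA =>
        (x + nA - (p.2 : ℕ)) % nA < LA ∧ (y + nB - (p.1 : ℕ)) % nB < LB)).card = LB * LA)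
    ∧ 2 * (∑ p ∈ Finset.univ.filter (fun p : Fin nB × Fin nA =>
        (x + nA - (p.2 : ℕ)) % nA < LA ∧ (y + nB - (p.1 : ℕ)) % nB < LB),
        ((x + nA - (p.2 : ℕ)) % nA * LB + (y + nB - (p.1 : ℕ)) % nB))
      = (LA * LB) * (LA * LB - 1) := by
  have hset : (Finset.univ.filter (fun p : Fin nB × Fin nA =>
      (x + nA - (p.2 : ℕ)) % nA < LA ∧ (y + nB - (p.1 : ℕ)) % nB < LB)) =
      (Finset.univ.filter (fun j : Fin nB => (y + nB - (j : ℕ)) % nB < LB)) ×ˢ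
      (Finset.univ.filter (fun i : Fin nA => (x + nA - (i : ℕ)) % nA < LA)) := by
    ext p
    simp only [Finset.mem_filter, Finset.mem_univ, true_and, Finset.mem_product]
    tauto
  constructor
  · rw [hset, Finset.card_product, aux_card nB LB y hB hLB, aux_card nA LA x hA hLA]
  · rw [hset, Finset.sum_product]
    have inner : ∀ j : Fin nB,
        (∑ i ∈ Finset.univ.filter (fun i : Fin nA => (x + nA - (i : ℕ)) % nA < LA),
          ((x + nA - (i : ℕ)) % nA * LB + (y + nB - (j : ℕ)) % nB))
        = (∑ k ∈ Finset.range LA, k) * LB + LA * ((y + nB - (j : ℕ)) % nB) := by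
      intro j
      rw [Finset.sum_add_distrib, ← Finset.sum_mul, aux_sum nA LA x hA hLA,
        Finset.sum_const, aux_card nA LA x hA hLA, smul_eq_mul]
    rw [Finset.sum_congr rfl (fun j _ => inner j), Finset.sum_add_distrib,
      Finset.sum_const, aux_card nB LB y hB hLB, smul_eq_mul, ← Finset.mul_sum,
      aux_sum nB LB y hB hLB]
    have h1 := Finset.sum_range_id_mul_two LA
    have h2 := Finset.sum_range_id_mul_two LB
    generalize hSA : (∑ k ∈ Finset.range LA, k) = SA at h1 ⊢
    generalize hSB : (∑ k ∈ Finset.range LB, k) = SB at h2 ⊢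
    rcases Nat.eq_zero_or_pos LA with h | hposA
    · subst h
      have : SA = 0 := by simpa using h1
      subst this
      simp
    rcases Nat.eq_zero_or_pos LB with h | hposB
    · subst h
      have : SB = 0 := by simpa using h2
      subst this
      simp
    obtain ⟨a, rfl⟩ : ∃ a, LA = a + 1 := ⟨LA - 1, by omega⟩
    obtain ⟨b, rfl⟩ : ∃ b, LB = b + 1 := ⟨LB - 1, by omega⟩
    simp only [Nat.add_sub_cancel] at h1 h2
    have hmul : (a + 1) * (b + 1) - 1 = a * b + a + b := by
      have h : (a + 1) * (b + 1) = a * b + a + b + 1 := by ring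
      omega
    rw [hmul]
    calc 2 * ((b + 1) * (SA * (b + 1)) + (a + 1) * SB)
        = (b + 1) * (b + 1) * (SA * 2) + (a + 1) * (SB * 2) := by ring
      _ = (b + 1) * (b + 1) * ((a + 1) * a) + (a + 1) * ((b + 1) * b) := by rw [h1, h2]
      _ = (a + 1) * (b + 1) * (a * b + a + b) := by ring



/-- β-level matrix-matrix cyclic scheme: `n = c·nA·nB` workers in `c` groups, each group
organized as in the position lemma (worker `(g, j, i)` holds A-meta-symbols
`i, ..., i+ℓA-1 (mod nA)` and B-meta-symbols `j, ..., j+ℓB-1 (mod nB)`; the product at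
A-position `i₁` and B-position `j₁` is processed at position `i₁ℓB + j₁`).  With
`ℓ = ℓA·ℓB` products per worker, `β = βA·βB ≤ c`, and decoding of a product meta-symbol
requiring `β` processed copies: the scheme tolerates `s = cℓ - β` stragglers and has
worst-case recovery number `Q = nℓ - cℓ(ℓ+1)/2 + ℓ(β-1) + 1`. -/
theorem stmt13 (c nA nB ℓA ℓB βA βB : ℕ) (hA : 0 < nA) (hB : 0 < nB)
    (hℓA : 0 < ℓA) (hℓB : 0 < ℓB) (hA' : ℓA ≤ nA) (hB' : ℓB ≤ nB)
    (hβA : 0 < βA) (hβB : 0 < βB) (hβc : βA * βB ≤ c) :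
    (∀ S : Finset (Fin c × (Fin nB × Fin nA)), S.card = c * (ℓA * ℓB) - βA * βB →
      ∀ (x : Fin nA) (y : Fin nB),
        βA * βB ≤ ((Finset.univ \ S).filter
          (fun w : Fin c × (Fin nB × Fin nA) =>
            ((x : ℕ) + nA - (w.2.2 : ℕ)) % nA < ℓA ∧
            ((y : ℕ) + nB - (w.2.1 : ℕ)) % nB < ℓB)).card) ∧
    (∀ t : Fin c × (Fin nB × Fin nA) → ℕ, (∀ w, t w ≤ ℓA * ℓB) →
      c * (nA * nB) * (ℓA * ℓB) - c * ((ℓA * ℓB) * (ℓA * ℓB + 1) / 2)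
          + (ℓA * ℓB) * (βA * βB - 1) + 1 ≤ ∑ w, t w →
      ∀ (x : Fin nA) (y : Fin nB),
        βA * βB ≤ (Finset.univ.filter
          (fun w : Fin c × (Fin nB × Fin nA) =>
            ((x : ℕ) + nA - (w.2.2 : ℕ)) % nA < ℓA ∧
            ((y : ℕ) + nB - (w.2.1 : ℕ)) % nB < ℓB ∧
            (((x : ℕ) + nA - (w.2.2 : ℕ)) % nA) * ℓB
              + ((y : ℕ) + nB - (w.2.1 : ℕ)) % nB < t w)).card) := by
  have hℓpos : 0 < ℓA * ℓB := Nat.mul_pos hℓA hℓB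
  constructor
  · -- Part 1: straggler tolerance
    intro S hS x y
    have hsplit : ((Finset.univ \ S).filter
        (fun w : Fin c × (Fin nB × Fin nA) =>
          ((x : ℕ) + nA - (w.2.2 : ℕ)) % nA < ℓA ∧
          ((y : ℕ) + nB - (w.2.1 : ℕ)) % nB < ℓB)) =
        (Finset.univ.filter
        (fun w : Fin c × (Fin nB × Fin nA) =>
          ((x : ℕ) + nA - (w.2.2 : ℕ)) % nA < ℓA ∧
          ((y : ℕ) + nB - (w.2.1 : ℕ)) % nB < ℓB)) \ S := by
      ext w
      simp only [Finset.mem_sdiff, Finset.mem_filter, Finset.mem_univ, true_and]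
      tauto
    have hcard : (Finset.univ.filter
        (fun w : Fin c × (Fin nB × Fin nA) =>
          ((x : ℕ) + nA - (w.2.2 : ℕ)) % nA < ℓA ∧
          ((y : ℕ) + nB - (w.2.1 : ℕ)) % nB < ℓB)).card = c * (ℓA * ℓB) := by
      rw [Finset.card_filter, Fintype.sum_prod_type]
      have hg : ∀ g : Fin c, (∑ p : Fin nB × Fin nA,
          if ((x : ℕ) + nA - (p.2 : ℕ)) % nA < ℓA ∧
            ((y : ℕ) + nB - (p.1 : ℕ)) % nB < ℓB then 1 else 0) = ℓB * ℓA := by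
        intro g
        rw [← Finset.card_filter]
        exact (aux_group nA nB ℓA ℓB (x : ℕ) (y : ℕ) hA hB hA' hB').1
      rw [Finset.sum_congr rfl (fun g _ => hg g), Finset.sum_const, Finset.card_univ,
        Fintype.card_fin, smul_eq_mul]
      ring
    rw [hsplit]
    have hβℓ : βA * βB ≤ c * (ℓA * ℓB) :=
      le_trans hβc (Nat.le_mul_of_pos_right c hℓpos)
    have h2 := Finset.le_card_sdiff S (Finset.univ.filter
        (fun w : Fin c × (Fin nB × Fin nA) =>
          ((x : ℕ) + nA - (w.2.2 : ℕ)) % nA < ℓA ∧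
          ((y : ℕ) + nB - (w.2.1 : ℕ)) % nB < ℓB))
    omega
  · -- Part 2: recovery threshold
    intro t ht hsum x y
    by_contra hcon
    push_neg at hcon
    obtain ⟨hcard0, hS0eq⟩ := aux_group nA nB ℓA ℓB (x : ℕ) (y : ℕ) hA hB hA' hB'
    set S0 := ∑ p ∈ Finset.univ.filter (fun p : Fin nB × Fin nA =>
        ((x : ℕ) + nA - (p.2 : ℕ)) % nA < ℓA ∧ ((y : ℕ) + nB - (p.1 : ℕ)) % nB < ℓB),
        (((x : ℕ) + nA - (p.2 : ℕ)) % nA * ℓB + ((y : ℕ) + nB - (p.1 : ℕ)) % nB)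
      with hS0def
    set e := nB * nA - ℓB * ℓA with he
    -- per-group bound
    have hg : ∀ g : Fin c, (∑ p : Fin nB × Fin nA, t (g, p)) ≤
        e * (ℓA * ℓB) + S0 + (Finset.univ.filter (fun p : Fin nB × Fin nA =>
          ((x : ℕ) + nA - (p.2 : ℕ)) % nA < ℓA ∧
          ((y : ℕ) + nB - (p.1 : ℕ)) % nB < ℓB ∧
          (((x : ℕ) + nA - (p.2 : ℕ)) % nA) * ℓB
            + ((y : ℕ) + nB - (p.1 : ℕ)) % nB < t (g, p))).card * (ℓA * ℓB) := by
      intro g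
      rw [← Finset.sum_filter_add_sum_filter_not Finset.univ (fun p : Fin nB × Fin nA =>
        ((x : ℕ) + nA - (p.2 : ℕ)) % nA < ℓA ∧ ((y : ℕ) + nB - (p.1 : ℕ)) % nB < ℓB)
        (fun p => t (g, p))]
      -- complement bound
      have hcomp : (∑ p ∈ Finset.univ.filter (fun p : Fin nB × Fin nA =>
          ¬(((x : ℕ) + nA - (p.2 : ℕ)) % nA < ℓA ∧ ((y : ℕ) + nB - (p.1 : ℕ)) % nB < ℓB)),
          t (g, p)) ≤ e * (ℓA * ℓB) := by
        have h1 := Finset.sum_le_card_nsmul (Finset.univ.filter (fun p : Fin nB × Fin nA =>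
          ¬(((x : ℕ) + nA - (p.2 : ℕ)) % nA < ℓA ∧ ((y : ℕ) + nB - (p.1 : ℕ)) % nB < ℓB)))
          (fun p => t (g, p)) (ℓA * ℓB) (fun p _ => ht (g, p))
        rw [smul_eq_mul] at h1
        have h2 := Finset.card_filter_add_card_filter_not
          (s := (Finset.univ : Finset (Fin nB × Fin nA))) (p := fun p : Fin nB × Fin nA =>
          ((x : ℕ) + nA - (p.2 : ℕ)) % nA < ℓA ∧ ((y : ℕ) + nB - (p.1 : ℕ)) % nB < ℓB)
        rw [Finset.card_univ, Fintype.card_prod, Fintype.card_fin, Fintype.card_fin, hcard0] at h2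
        have h3 : (Finset.univ.filter (fun p : Fin nB × Fin nA =>
          ¬(((x : ℕ) + nA - (p.2 : ℕ)) % nA < ℓA ∧ ((y : ℕ) + nB - (p.1 : ℕ)) % nB < ℓB))).card
            = e := by omega
        calc (∑ p ∈ Finset.univ.filter (fun p : Fin nB × Fin nA =>
            ¬(((x : ℕ) + nA - (p.2 : ℕ)) % nA < ℓA ∧ ((y : ℕ) + nB - (p.1 : ℕ)) % nB < ℓB)),
            t (g, p)) ≤ _ := h1
          _ = e * (ℓA * ℓB) := by rw [h3]
      -- holders bound
      have hhold : (∑ p ∈ Finset.univ.filter (fun p : Fin nB × Fin nA =>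
          ((x : ℕ) + nA - (p.2 : ℕ)) % nA < ℓA ∧ ((y : ℕ) + nB - (p.1 : ℕ)) % nB < ℓB),
          t (g, p)) ≤ S0 + (Finset.univ.filter (fun p : Fin nB × Fin nA =>
          ((x : ℕ) + nA - (p.2 : ℕ)) % nA < ℓA ∧
          ((y : ℕ) + nB - (p.1 : ℕ)) % nB < ℓB ∧
          (((x : ℕ) + nA - (p.2 : ℕ)) % nA) * ℓB
            + ((y : ℕ) + nB - (p.1 : ℕ)) % nB < t (g, p))).card * (ℓA * ℓB) := by
        rw [← Finset.sum_filter_add_sum_filter_not (Finset.univ.filter (fun p : Fin nB × Fin nA =>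
          ((x : ℕ) + nA - (p.2 : ℕ)) % nA < ℓA ∧ ((y : ℕ) + nB - (p.1 : ℕ)) % nB < ℓB))
          (fun p : Fin nB × Fin nA => (((x : ℕ) + nA - (p.2 : ℕ)) % nA) * ℓB
            + ((y : ℕ) + nB - (p.1 : ℕ)) % nB < t (g, p)) (fun p => t (g, p))]
        have heq : (Finset.univ.filter (fun p : Fin nB × Fin nA =>
            ((x : ℕ) + nA - (p.2 : ℕ)) % nA < ℓA ∧
            ((y : ℕ) + nB - (p.1 : ℕ)) % nB < ℓB)).filter
            (fun p : Fin nB × Fin nA => (((x : ℕ) + nA - (p.2 : ℕ)) % nA) * ℓB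
              + ((y : ℕ) + nB - (p.1 : ℕ)) % nB < t (g, p)) =
            Finset.univ.filter (fun p : Fin nB × Fin nA =>
            ((x : ℕ) + nA - (p.2 : ℕ)) % nA < ℓA ∧
            ((y : ℕ) + nB - (p.1 : ℕ)) % nB < ℓB ∧
            (((x : ℕ) + nA - (p.2 : ℕ)) % nA) * ℓB
              + ((y : ℕ) + nB - (p.1 : ℕ)) % nB < t (g, p)) := by
          ext p
          simp only [Finset.mem_filter, Finset.mem_univ, true_and]
          tauto
        have hbd1 := Finset.sum_le_card_nsmul ((Finset.univ.filter (fun p : Fin nB × Fin nA =>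
          ((x : ℕ) + nA - (p.2 : ℕ)) % nA < ℓA ∧ ((y : ℕ) + nB - (p.1 : ℕ)) % nB < ℓB)).filter
          (fun p : Fin nB × Fin nA => (((x : ℕ) + nA - (p.2 : ℕ)) % nA) * ℓB
            + ((y : ℕ) + nB - (p.1 : ℕ)) % nB < t (g, p)))
          (fun p => t (g, p)) (ℓA * ℓB) (fun p _ => ht (g, p))
        rw [smul_eq_mul, heq] at hbd1
        rw [heq]
        have hbd2 : (∑ p ∈ (Finset.univ.filter (fun p : Fin nB × Fin nA =>
            ((x : ℕ) + nA - (p.2 : ℕ)) % nA < ℓA ∧ ((y : ℕ) + nB - (p.1 : ℕ)) % nB < ℓB)).filter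
            (fun p : Fin nB × Fin nA => ¬((((x : ℕ) + nA - (p.2 : ℕ)) % nA) * ℓB
              + ((y : ℕ) + nB - (p.1 : ℕ)) % nB < t (g, p))), t (g, p)) ≤ S0 := by
          refine le_trans (Finset.sum_le_sum
            (g := fun p : Fin nB × Fin nA =>
              (((x : ℕ) + nA - (p.2 : ℕ)) % nA) * ℓB + ((y : ℕ) + nB - (p.1 : ℕ)) % nB) ?_) ?_
          · intro p hp
            exact le_of_not_gt (Finset.mem_filter.mp hp).2
          · exact Finset.sum_le_sum_of_subset (Finset.filter_subset _ _)
        omega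
      omega
    -- global bound
    have hPsum : (Finset.univ.filter
        (fun w : Fin c × (Fin nB × Fin nA) =>
          ((x : ℕ) + nA - (w.2.2 : ℕ)) % nA < ℓA ∧
          ((y : ℕ) + nB - (w.2.1 : ℕ)) % nB < ℓB ∧
          (((x : ℕ) + nA - (w.2.2 : ℕ)) % nA) * ℓB
            + ((y : ℕ) + nB - (w.2.1 : ℕ)) % nB < t w)).card
        = ∑ g : Fin c, (Finset.univ.filter (fun p : Fin nB × Fin nA =>
          ((x : ℕ) + nA - (p.2 : ℕ)) % nA < ℓA ∧
          ((y : ℕ) + nB - (p.1 : ℕ)) % nB < ℓB ∧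
          (((x : ℕ) + nA - (p.2 : ℕ)) % nA) * ℓB
            + ((y : ℕ) + nB - (p.1 : ℕ)) % nB < t (g, p))).card := by
      rw [Finset.card_filter, Fintype.sum_prod_type]
      exact Finset.sum_congr rfl (fun g _ => (Finset.card_filter _ _).symm)
    have htot : (∑ w, t w) ≤ c * (e * (ℓA * ℓB) + S0) +
        (Finset.univ.filter
        (fun w : Fin c × (Fin nB × Fin nA) =>
          ((x : ℕ) + nA - (w.2.2 : ℕ)) % nA < ℓA ∧
          ((y : ℕ) + nB - (w.2.1 : ℕ)) % nB < ℓB ∧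
          (((x : ℕ) + nA - (w.2.2 : ℕ)) % nA) * ℓB
            + ((y : ℕ) + nB - (w.2.1 : ℕ)) % nB < t w)).card * (ℓA * ℓB) := by
      rw [Fintype.sum_prod_type, hPsum, Finset.sum_mul]
      calc (∑ g : Fin c, ∑ p : Fin nB × Fin nA, t (g, p))
          ≤ ∑ g : Fin c, (e * (ℓA * ℓB) + S0 + (Finset.univ.filter (fun p : Fin nB × Fin nA =>
            ((x : ℕ) + nA - (p.2 : ℕ)) % nA < ℓA ∧
            ((y : ℕ) + nB - (p.1 : ℕ)) % nB < ℓB ∧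
            (((x : ℕ) + nA - (p.2 : ℕ)) % nA) * ℓB
              + ((y : ℕ) + nB - (p.1 : ℕ)) % nB < t (g, p))).card * (ℓA * ℓB)) :=
            Finset.sum_le_sum (fun g _ => hg g)
        _ = c * (e * (ℓA * ℓB) + S0) + ∑ g : Fin c, (Finset.univ.filter
            (fun p : Fin nB × Fin nA =>
            ((x : ℕ) + nA - (p.2 : ℕ)) % nA < ℓA ∧
            ((y : ℕ) + nB - (p.1 : ℕ)) % nB < ℓB ∧
            (((x : ℕ) + nA - (p.2 : ℕ)) % nA) * ℓB
              + ((y : ℕ) + nB - (p.1 : ℕ)) % nB < t (g, p))).card * (ℓA * ℓB) := by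
            rw [Finset.sum_add_distrib, Finset.sum_const, Finset.card_univ,
              Fintype.card_fin, smul_eq_mul]
    -- numeric endgame
    have hβ1 : 1 ≤ βA * βB := Nat.mul_pos hβA hβB
    have hPmul : (Finset.univ.filter
        (fun w : Fin c × (Fin nB × Fin nA) =>
          ((x : ℕ) + nA - (w.2.2 : ℕ)) % nA < ℓA ∧
          ((y : ℕ) + nB - (w.2.1 : ℕ)) % nB < ℓB ∧
          (((x : ℕ) + nA - (w.2.2 : ℕ)) % nA) * ℓB
            + ((y : ℕ) + nB - (w.2.1 : ℕ)) % nB < t w)).card * (ℓA * ℓB)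
        ≤ (ℓA * ℓB) * (βA * βB - 1) := by
      calc _ ≤ (βA * βB - 1) * (ℓA * ℓB) := Nat.mul_le_mul_right _ (by omega)
        _ = (ℓA * ℓB) * (βA * βB - 1) := by ring
    have hD : (ℓA * ℓB) * (ℓA * ℓB + 1) / 2 * 2 = (ℓA * ℓB) * (ℓA * ℓB + 1) :=
      Nat.div_mul_cancel (Nat.even_mul_succ_self _).two_dvd
    have hsq : (ℓA * ℓB) * ((ℓA * ℓB) - 1) + (ℓA * ℓB) * ((ℓA * ℓB) + 1)
        = 2 * ((ℓA * ℓB) * (ℓA * ℓB)) := by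
      obtain ⟨k, hk⟩ : ∃ k, ℓA * ℓB = k + 1 := ⟨ℓA * ℓB - 1, by omega⟩
      rw [hk]
      simp only [Nat.add_sub_cancel]
      ring
    have hm : nA * nB = ℓB * ℓA + e := by
      have h1 : ℓB * ℓA ≤ nB * nA := Nat.mul_le_mul hB' hA'
      have h2 : nA * nB = nB * nA := by ring
      omega
    have E2 : (c * (nA * nB) * (ℓA * ℓB)) * 2 =
        (c * (e * (ℓA * ℓB) + S0) + c * ((ℓA * ℓB) * (ℓA * ℓB + 1) / 2)) * 2 := by
      rw [hm]
      calc (c * (ℓB * ℓA + e) * (ℓA * ℓB)) * 2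
          = c * (e * (ℓA * ℓB) * 2 + 2 * ((ℓA * ℓB) * (ℓA * ℓB))) := by ring
        _ = c * (e * (ℓA * ℓB) * 2 + ((ℓA * ℓB) * ((ℓA * ℓB) - 1)
            + (ℓA * ℓB) * ((ℓA * ℓB) + 1))) := by rw [hsq]
        _ = c * (e * (ℓA * ℓB) * 2 + (2 * S0 + (ℓA * ℓB) * (ℓA * ℓB + 1) / 2 * 2)) := by
            rw [hS0eq, hD]
        _ = (c * (e * (ℓA * ℓB) + S0) + c * ((ℓA * ℓB) * (ℓA * ℓB + 1) / 2)) * 2 := by ring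
    have E := Nat.eq_of_mul_eq_mul_right (by norm_num : 0 < 2) E2
    rw [E, Nat.add_sub_cancel] at hsum
    omega
end

section
/- The cyclic coded-at-the-bottom scheme with Δ = n, ℓ_u uncoded symbols at the top and ℓ_c random-coded symbols at the bottom of each worker (total ℓ = ℓ_u + ℓ_c = γΔ, γ = γ_u + γ_c) is resilient to s = ⌊(n²γ_c + nγ_u - 1)/(nγ_c + 1)⌋ stragglers: from any k = n - s workers, the union of uncoded symbols together with the k·ℓ_c generic coded equations determines all Δ unknowns. -/
/-! The uncoded symbols held by a set `T` of `k` workers form the union `A_ℓ` of the arcs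
of length `ℓ = ℓu` on `ℤ/n` starting at the points of `T`. Since `A_{ℓ+1}` contains both
`A_ℓ` and its translate `A_ℓ + 1`, and a nonempty proper subset of `ℤ/n` is never invariant
under `+1`, each extra symbol per arc covers at least one new point until everything is
covered: `|A_ℓ| ≥ min(n, k + ℓ - 1)`. The number of stragglers `s` is chosen exactly so that
`ℓu + k - 1 + k·ℓc ≥ n` whenever `k ≥ n - s`. -/

open Finset

def arcUnion (n ℓ : ℕ) (T : Finset (Fin n)) : Finset ℕ :=
  T.biUnion fun i => (range ℓ).image fun p => ((i : ℕ) + p) % n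

section ArcUnion

variable {n : ℕ}

lemma arcUnion_subset_range (hn : 0 < n) (ℓ : ℕ) (T : Finset (Fin n)) :
    arcUnion n ℓ T ⊆ range n := by
  intro y hy
  simp only [arcUnion, mem_biUnion, mem_image] at hy
  obtain ⟨i, -, p, -, rfl⟩ := hy
  exact mem_range.2 (Nat.mod_lt _ hn)

lemma card_arcUnion_one (T : Finset (Fin n)) : (arcUnion n 1 T).card = T.card := by
  have h : arcUnion n 1 T = T.image Fin.val := by
    ext y
    simp [arcUnion, Nat.mod_eq_of_lt, eq_comm]
  rw [h, card_image_of_injective _ Fin.val_injective]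

lemma arcUnion_mono {ℓ ℓ' : ℕ} (h : ℓ ≤ ℓ') (T : Finset (Fin n)) :
    arcUnion n ℓ T ⊆ arcUnion n ℓ' T :=
  biUnion_mono fun _ _ => image_subset_image (range_subset_range.2 h)

lemma image_succ_mod_arcUnion_subset (ℓ : ℕ) (T : Finset (Fin n)) :
    (arcUnion n ℓ T).image (fun y => (y + 1) % n) ⊆ arcUnion n (ℓ + 1) T := by
  intro y hy
  simp only [arcUnion, mem_image, mem_biUnion, mem_range] at hy ⊢
  obtain ⟨_, ⟨i, hi, p, hp, rfl⟩, rfl⟩ := hy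
  exact ⟨i, hi, p + 1, by omega, by rw [Nat.mod_add_mod, add_assoc]⟩

lemma range_subset_of_succ_mod_mem {a : ℕ} {A : Finset ℕ} (ha : a ∈ A) (han : a < n)
    (hA : ∀ y ∈ A, (y + 1) % n ∈ A) : range n ⊆ A := by
  have hmem : ∀ m, (a + m) % n ∈ A := by
    intro m
    induction m with
    | zero => rwa [add_zero, Nat.mod_eq_of_lt han]
    | succ m ih => simpa only [Nat.mod_add_mod, add_assoc] using hA _ ih
  intro y hy
  have hy := mem_range.1 hy
  have hwrap : (a + (y + n - a)) % n = y := by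
    rw [show a + (y + n - a) = y + n by omega, Nat.add_mod_right, Nat.mod_eq_of_lt hy]
  exact hwrap ▸ hmem _

lemma card_lt_card_union_image_succ_mod {A : Finset ℕ} (hA : A ⊆ range n)
    (hne : A.Nonempty) (hfull : A ≠ range n) :
    A.card < (A ∪ A.image fun y => (y + 1) % n).card := by
  refine card_lt_card (ssubset_of_subset_of_ne subset_union_left fun heq => hfull ?_)
  obtain ⟨a, ha⟩ := hne
  refine subset_antisymm hA (range_subset_of_succ_mod_mem ha (mem_range.1 (hA ha)) fun y hy => ?_)
  have hy' : (y + 1) % n ∈ A ∪ A.image fun y => (y + 1) % n :=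
    mem_union_right _ (mem_image_of_mem _ hy)
  rwa [← heq] at hy'

theorem min_le_card_arcUnion {T : Finset (Fin n)} (hT : T.Nonempty) {ℓ : ℕ}
    (hℓ : 1 ≤ ℓ) : min n (T.card + ℓ - 1) ≤ (arcUnion n ℓ T).card := by
  have hn : 0 < n := hT.choose.pos
  have hk := hT.card_pos
  induction ℓ, hℓ using Nat.le_induction with
  | base => rw [card_arcUnion_one]; omega
  | succ ℓ hℓ ih =>
    have hmono : arcUnion n ℓ T ⊆ arcUnion n (ℓ + 1) T := arcUnion_mono (Nat.le_succ ℓ) T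
    by_cases hfull : arcUnion n ℓ T = range n
    · have := card_le_card hmono
      rw [hfull, card_range] at this
      omega
    · have hne : (arcUnion n ℓ T).Nonempty := card_pos.1 (by omega)
      have hgrow := card_lt_card_union_image_succ_mod (arcUnion_subset_range hn ℓ T) hne hfull
      have hsub := card_le_card (union_subset hmono (image_succ_mod_arcUnion_subset ℓ T))
      omega

end ArcUnion

lemma le_sub_one_add_mul_succ_of_le_div {n ℓu ℓc k j : ℕ} (hsplit : k + j = n)
    (hj : j ≤ (n * ℓc + ℓu - 1) / (ℓc + 1)) : n ≤ ℓu - 1 + k * (ℓc + 1) := by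
  have hj' : j * (ℓc + 1) ≤ n * ℓc + ℓu - 1 :=
    (Nat.mul_le_mul_right _ hj).trans (Nat.div_mul_le_self _ _)
  subst hsplit
  rw [mul_add_one, add_mul] at hj'
  rw [mul_add_one]
  omega

theorem stmt15_general (n ℓu ℓc : ℕ) (hu : 0 < ℓu) (hle : ℓu + ℓc ≤ n) :
    ∀ S : Finset (Fin n), S.card ≤ (n * ℓc + ℓu - 1) / (ℓc + 1) →
      n ≤ ((Finset.univ \ S).biUnion
            (fun i => (Finset.range ℓu).image (fun p => ((i : ℕ) + p) % n))).card
          + (Finset.univ \ S).card * ℓc := by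
  intro S hS
  have hsplit : (univ \ S).card + S.card = n := by
    rw [card_sdiff_add_card_eq_card (subset_univ S), card_univ, Fintype.card_fin]
  have hcount := le_sub_one_add_mul_succ_of_le_div hsplit hS
  have hT : (univ \ S).Nonempty := card_pos.1 <| Nat.pos_of_ne_zero fun h0 => by
    rw [h0, zero_mul] at hcount
    omega
  rw [mul_add_one] at hcount
  have hcover := min_le_card_arcUnion hT hu
  exact le_trans (by omega) (Nat.add_le_add_right hcover _)

/-- Straggler resilience of the cyclic coded-at-the-bottom matrix-vector scheme with
`Δ = n` workers: worker `i` holds the `ℓu` uncoded symbols `i, ..., i+ℓu-1 (mod n)` followed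
by `ℓc` generically coded symbols.  Decoding from a set of workers requires
(number of distinct uncoded symbols obtained) + (number of workers)·ℓc ≥ n.
The scheme is resilient to `s = ⌊(n·ℓc + ℓu - 1)/(ℓc + 1)⌋` stragglers (this equals
`⌊(n²γ_c + nγ_u - 1)/(nγ_c + 1)⌋` with `γ_u = ℓu/n`, `γ_c = ℓc/n`). -/
theorem stmt15 (n ℓu ℓc : ℕ) (hn : 0 < n) (hu : 0 < ℓu) (hle : ℓu + ℓc ≤ n) :
    ∀ S : Finset (Fin n), S.card ≤ (n * ℓc + ℓu - 1) / (ℓc + 1) →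
      n ≤ ((Finset.univ \ S).biUnion
            (fun i => (Finset.range ℓu).image (fun p => ((i : ℕ) + p) % n))).card
          + (Finset.univ \ S).card * ℓc :=
  stmt15_general n ℓu ℓc hu hle
end

section
/- The cyclic coded-at-the-bottom matrix-matrix scheme (Algorithm 5) with n = m·a₂b₂ workers, a_u uncoded and a_c coded A-block-columns per worker (cyclically placed with Δ_A = a₂) and mb₁ uncoded B-block-columns per worker (Δ_B = mb₂), has recovery threshold τ = n - m·a₂b₁ + κ_min, where κ_min is the minimum positive integer κ satisfying ⌈κ/(mb₁)⌉ + κ·a_c ≥ a₂ - a_u + 1. -/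
/-!
Fix a B-block-column `j`: exactly `w·a` workers store it (`w = m·b₁` whole groups of `a = a₂`
workers). Any `τ` workers include at least `κ_min` of them, and pigeonhole puts `⌈κ_min / w⌉` of
those into one group. Inside a group the uncoded A-columns start at distinct points of the cycle
`ZMod a`, so their arcs of length `a_u` cover at least `min a (⌈κ_min / w⌉ + a_u - 1)` points: a
union of arcs that is not the whole cycle grows when every arc is extended by one step. Adding the
`κ_min·a_c` coded equations reaches `a`. Conversely, all workers not storing `j` together with
`κ_min - 1` workers storing it, all at positions below `⌈(κ_min - 1) / w⌉`, yield fewer than `a`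
equations by minimality of `κ_min`.
-/

open Finset
open scoped Pointwise

namespace ZMod

variable {a : ℕ} [NeZero a]

theorem eq_univ_of_add_one_mem {S : Finset (ZMod a)} (hS : S.Nonempty)
    (h : ∀ x ∈ S, x + 1 ∈ S) : S = univ := by
  obtain ⟨s, hs⟩ := hS
  have hshift : ∀ k : ℕ, s + k ∈ S := by
    intro k
    induction k with
    | zero => simpa using hs
    | succ k ih => simpa [add_assoc] using h _ ih
  refine eq_univ_of_forall fun t => ?_
  simpa using hshift (t - s).val

theorem min_le_card_add_image_range {S : Finset (ZMod a)} (hS : S.Nonempty) (k : ℕ) :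
    min a (#S + k) ≤ #(S + (range (k + 1)).image (Nat.cast : ℕ → ZMod a)) := by
  induction k with
  | zero => simp
  | succ k ih =>
    set U := S + (range (k + 1)).image (Nat.cast : ℕ → ZMod a)
    have hU : U ⊆ S + (range (k + 2)).image (Nat.cast : ℕ → ZMod a) :=
      add_subset_add_left (image_subset_image (range_subset_range.2 (by omega)))
    have hU1 : ∀ x ∈ U, x + 1 ∈ S + (range (k + 2)).image (Nat.cast : ℕ → ZMod a) := by
      intro x hx
      obtain ⟨s, hs, _, hy, rfl⟩ := mem_add.1 hx
      obtain ⟨p, hp, rfl⟩ := mem_image.1 hy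
      exact mem_add.2 ⟨s, hs, _, mem_image.2 ⟨p + 1, by simpa using hp, rfl⟩,
        by push_cast; ring⟩
    by_cases huniv : U = univ
    · calc min a (#S + (k + 1)) ≤ #U := by simp [huniv]
        _ ≤ _ := card_le_card hU
    · obtain ⟨x, hx, hx1⟩ : ∃ x ∈ U, x + 1 ∉ U := by
        by_contra! hclosed
        exact huniv (eq_univ_of_add_one_mem (hS.add (by simp)) hclosed)
      calc min a (#S + (k + 1)) ≤ #U + 1 := by omega
        _ = #(insert (x + 1) U) := (card_insert_of_notMem hx1).symm
        _ ≤ _ := card_le_card (insert_subset (hU1 x hx) hU)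

end ZMod

theorem Nat.add_sub_mod_eq_val_sub {M : ℕ} [NeZero M] {j g : ℕ} (hg : g ≤ j + M) :
    (j + M - g) % M = ((j : ZMod M) - g).val := by
  rw [← ZMod.val_natCast, Nat.cast_sub hg]
  simp

theorem Nat.add_sub_add_sub_mod_mod {M : ℕ} [NeZero M] (j : ℕ) {g : ℕ} (hg : g < M) :
    (j + M - (j + M - g) % M) % M = g := by
  have hlt : (j + M - g) % M < M := Nat.mod_lt _ (NeZero.pos M)
  rw [Nat.add_sub_mod_eq_val_sub (by omega), Nat.add_sub_mod_eq_val_sub (by omega)]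
  simp [ZMod.val_natCast, Nat.mod_eq_of_lt hg]

/-- The groups `g < M` whose cyclic window `g, g + 1, …, g + w - 1 (mod M)` contains `j`. -/
def window (M w j : ℕ) : Finset ℕ := {g ∈ range M | (j + M - g) % M < w}

theorem card_window {M w : ℕ} [NeZero M] (hw : w ≤ M) (j : ℕ) : #(window M w j) = w := by
  have hinv : ∀ g < M, (j + M - (j + M - g) % M) % M = g := fun g =>
    Nat.add_sub_add_sub_mod_mod j
  have hlt : ∀ g, (j + M - g) % M < M := fun g => Nat.mod_lt _ (NeZero.pos M)
  refine (card_nbij' (t := range w) (fun g => (j + M - g) % M) (fun g => (j + M - g) % M)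
    ?_ ?_ ?_ ?_).trans (card_range w) <;> intro g hg <;> simp only [window, coe_filter,
      coe_range, mem_range, Set.mem_Iio, Set.mem_ofPred_eq] at hg ⊢
  · exact hg.2
  · exact ⟨hlt g, by rwa [hinv g (by omega)]⟩
  · exact hinv g hg.1
  · exact hinv g (by omega)

theorem card_filter_div_mod_mem {N M a : ℕ} (hN : N = M * a) {s : Finset (ℕ × ℕ)}
    (hs : s ⊆ range M ×ˢ range a) :
    #{i : Fin N | ((i : ℕ) / a, (i : ℕ) % a) ∈ s} = #s := by
  refine card_bij (fun i _ => ((i : ℕ) / a, (i : ℕ) % a)) (fun i hi => (mem_filter.1 hi).2)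
    ?_ ?_
  · intro i _ i' _ h
    simp only [Prod.mk.injEq] at h
    exact Fin.ext (by rw [← Nat.div_add_mod i a, ← Nat.div_add_mod i' a, h.1, h.2])
  · rintro ⟨g, r⟩ hgr
    obtain ⟨hg, hr⟩ := mem_product.1 (hs hgr)
    simp only [mem_range] at hg hr
    have ha : 0 < a := by omega
    have hlt : a * g + r < N := by rw [hN]; nlinarith
    have hdivmod : ((a * g + r) / a, (a * g + r) % a) = (g, r) := by
      simp [Nat.mul_add_div ha, Nat.div_eq_of_lt hr, Nat.mod_eq_of_lt hr]
    exact ⟨⟨a * g + r, hlt⟩, mem_filter.2 ⟨mem_univ _, hdivmod ▸ hgr⟩, hdivmod⟩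

def StoresB {N : ℕ} (M w a j : ℕ) (i : Fin N) : Prop := (j + M - (i : ℕ) / a) % M < w

instance {N : ℕ} (M w a j : ℕ) : DecidablePred (StoresB (N := N) M w a j) := fun _ =>
  inferInstanceAs (Decidable (_ < _))

theorem storesB_iff_div_mem_window {N M a w j : ℕ} (hN : N = M * a) (i : Fin N) :
    StoresB M w a j i ↔ (i : ℕ) / a ∈ window M w j := by
  have : (i : ℕ) / a < M := Nat.div_lt_of_lt_mul (by rw [mul_comm, ← hN]; exact i.isLt)
  simp [StoresB, window, this]

theorem card_filter_storesB {N M a w : ℕ} [NeZero M] [NeZero a] (hN : N = M * a) (hw : w ≤ M)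
    (j : ℕ) : #{i : Fin N | StoresB M w a j i} = w * a := by
  have hsub : window M w j ×ˢ range a ⊆ range M ×ˢ range a :=
    product_subset_product_left (filter_subset _ _)
  calc #{i : Fin N | StoresB M w a j i}
      = #{i : Fin N | ((i : ℕ) / a, (i : ℕ) % a) ∈ window M w j ×ˢ range a} := by
        refine congrArg card (filter_congr fun i _ => ?_)
        simp [storesB_iff_div_mem_window hN, Nat.mod_lt _ (NeZero.pos a)]
    _ = w * a := by rw [card_filter_div_mod_mem hN hsub, card_product, card_window hw, card_range]

/-- The distinct uncoded A-block-columns held by the workers of `F`, worker `i` holding the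
`k` columns `i, …, i + k - 1 (mod a)`. -/
def uncodedSymbols {N : ℕ} (a k : ℕ) (F : Finset (Fin N)) : Finset ℕ :=
  F.biUnion fun i => (range k).image fun p => ((i : ℕ) % a + p) % a

theorem Finset.exists_filter_subset_card_eq {α : Type*} [Fintype α] [DecidableEq α]
    {p : α → Prop} [DecidablePred p] {P : Finset α} (hP : ∀ x ∈ P, p x) {κ : ℕ}
    (hκ : κ ≤ #P) :
    ∃ T : Finset α, #T = Fintype.card α - #{x | p x} + κ ∧ {x ∈ T | p x} ⊆ P ∧
      #{x ∈ T | p x} = κ := by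
  obtain ⟨P', hP'P, hP'⟩ := exists_subset_card_eq hκ
  have hfilter : {x ∈ ({x | ¬p x} : Finset α) ∪ P' | p x} = P' := by
    ext x
    simp only [mem_filter, mem_union, mem_univ, true_and]
    constructor
    · rintro ⟨hx | hx, hpx⟩
      exacts [absurd hpx hx, hx]
    · intro hx
      exact ⟨Or.inr hx, hP x (hP'P hx)⟩
  refine ⟨({x | ¬p x} : Finset α) ∪ P', ?_, hfilter.le.trans hP'P, by rw [hfilter, hP']⟩
  have hdisj : Disjoint ({x | ¬p x} : Finset α) P' :=
    disjoint_left.2 fun x hx hxP' => (mem_filter.1 hx).2 (hP x (hP'P hxP'))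
  have hsplit : #{x | p x} + #{x | ¬p x} = Fintype.card α :=
    card_filter_add_card_filter_not (s := univ) p
  rw [card_union_of_disjoint hdisj, hP']
  omega

theorem uncodedSymbols_subset_range {N a k q : ℕ} {F : Finset (Fin N)}
    (hF : ∀ i ∈ F, (i : ℕ) % a < q) : uncodedSymbols a k F ⊆ range (q + k - 1) := by
  intro x hx
  simp only [uncodedSymbols, mem_biUnion, mem_image, mem_range] at hx
  obtain ⟨i, hi, p, hp, rfl⟩ := hx
  have := Nat.mod_le ((i : ℕ) % a + p) a
  have := hF i hi
  rw [mem_range]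
  omega

/-- Pigeonhole puts `q` workers of `F` into one group, where their residues are distinct. -/
theorem min_le_card_uncodedSymbols {N a k q : ℕ} [NeZero a] (hk : 0 < k) {F : Finset (Fin N)}
    {G : Finset ℕ} (hFG : ∀ i ∈ F, (i : ℕ) / a ∈ G) (hF : #G * (q - 1) < #F) :
    min a (q + k - 1) ≤ #(uncodedSymbols a k F) := by
  obtain ⟨g, -, hg⟩ := exists_lt_card_fiber_of_mul_lt_card_of_maps_to hFG hF
  set Fg := F.filter fun i : Fin N => (i : ℕ) / a = g
  set S := Fg.image fun i : Fin N => ((i : ℕ) : ZMod a)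
  have hS : #S = #Fg := by
    refine card_image_of_injOn fun i hi i' hi' h => Fin.ext ?_
    have hmod : (i : ℕ) % a = (i' : ℕ) % a := (ZMod.natCast_eq_natCast_iff' _ _ _).1 h
    have hdiv : (i : ℕ) / a = (i' : ℕ) / a := by
      rw [(mem_filter.1 hi).2, (mem_filter.1 hi').2]
    rw [← Nat.div_add_mod i a, ← Nat.div_add_mod i' a, hmod, hdiv]
  have hSne : S.Nonempty := by
    rw [← card_pos, hS]
    omega
  have hsub : S + (range (k - 1 + 1)).image (Nat.cast : ℕ → ZMod a) ⊆
      (uncodedSymbols a k F).image Nat.cast := by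
    intro x hx
    obtain ⟨_, hs, _, hy, rfl⟩ := mem_add.1 hx
    obtain ⟨i, hi, rfl⟩ : ∃ i ∈ Fg, ((i : ℕ) : ZMod a) = _ := mem_image.1 hs
    obtain ⟨p, hp, rfl⟩ := mem_image.1 hy
    refine mem_image.2 ⟨((i : ℕ) % a + p) % a, ?_, by push_cast [ZMod.natCast_mod]; rfl⟩
    exact mem_biUnion.2 ⟨i, (mem_filter.1 hi).1,
      mem_image.2 ⟨p, by simp only [mem_range] at hp ⊢; omega, rfl⟩⟩
  have hq : q ≤ #S := by omega
  calc min a (q + k - 1) ≤ min a (#S + (k - 1)) := by omega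
    _ ≤ #(S + (range (k - 1 + 1)).image (Nat.cast : ℕ → ZMod a)) :=
      ZMod.min_le_card_add_image_range hSne (k - 1)
    _ ≤ #((uncodedSymbols a k F).image (Nat.cast : ℕ → ZMod a)) := card_le_card hsub
    _ ≤ #(uncodedSymbols a k F) := card_image_le

theorem le_card_uncodedSymbols_add {N M a w k c κ : ℕ} [NeZero M] [NeZero a] (hN : N = M * a)
    (hw₀ : 0 < w) (hw : w ≤ M) (hk : 0 < k) (hκ₀ : 0 < κ) (hκ : a - k + 1 ≤ κ ⌈/⌉ w + κ * c)
    (j : ℕ) {T : Finset (Fin N)} (hT : N - w * a + κ ≤ #T) :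
    a ≤ #(uncodedSymbols a k {i ∈ T | StoresB M w a j i}) + #{i ∈ T | StoresB M w a j i} * c := by
  have hF : κ ≤ #{i ∈ T | StoresB M w a j i} := by
    have hsplit := card_filter_add_card_filter_not (s := T) fun i => StoresB M w a j i
    have hrest : #{i ∈ T | ¬StoresB M w a j i} ≤ #({i | StoresB M w a j i} : Finset (Fin N))ᶜ :=
      card_le_card fun i hi => by simpa using (mem_filter.1 hi).2
    rw [card_compl, Fintype.card_fin, card_filter_storesB hN hw] at hrest
    omega
  set F := {i ∈ T | StoresB M w a j i}
  set q := κ ⌈/⌉ w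
  have hq₀ : 0 < q := (gc_mul_ceilDiv hw₀).lt_iff_lt.2 (by rwa [mul_zero])
  have hq : w * (q - 1) < κ := (gc_mul_ceilDiv hw₀).lt_iff_lt.1 (Nat.sub_lt hq₀ one_pos)
  have hmin : min a (q + k - 1) ≤ #(uncodedSymbols a k F) :=
    min_le_card_uncodedSymbols hk (G := window M w j)
      (fun i hi => (storesB_iff_div_mem_window hN i).1 (mem_filter.1 hi).2)
      (by rw [card_window hw]; omega)
  have hc : κ * c ≤ #F * c := Nat.mul_le_mul_right c hF
  omega

theorem exists_card_eq_card_uncodedSymbols_add_lt {N M a w k c κ : ℕ} [NeZero M] [NeZero a]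
    (hN : N = M * a) (hw₀ : 0 < w) (hw : w ≤ M) (hκ : κ ⌈/⌉ w + k - 1 + κ * c < a) (j : ℕ) :
    ∃ T : Finset (Fin N), #T = N - w * a + κ ∧
      #(uncodedSymbols a k {i ∈ T | StoresB M w a j i}) + #{i ∈ T | StoresB M w a j i} * c < a := by
  set q := κ ⌈/⌉ w
  set P := ({i | ((i : ℕ) / a, (i : ℕ) % a) ∈ window M w j ×ˢ range q} : Finset (Fin N)) with hPdef
  have hsub : window M w j ×ˢ range q ⊆ range M ×ˢ range a :=
    product_subset_product (filter_subset _ _) (range_subset_range.2 (by omega))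
  have hP : #P = w * q := by
    rw [hPdef, card_filter_div_mod_mem hN hsub, card_product, card_window hw, card_range]
  have hPstores : ∀ i ∈ P, StoresB M w a j i := fun i hi =>
    (storesB_iff_div_mem_window hN i).2 (mem_product.1 (mem_filter.1 hi).2).1
  have hκP : κ ≤ #P := hP ▸ le_smul_ceilDiv hw₀
  obtain ⟨T, hT, hTP, hTκ⟩ := exists_filter_subset_card_eq hPstores hκP
  refine ⟨T, by rw [hT, Fintype.card_fin, card_filter_storesB hN hw], ?_⟩
  have hres : ∀ i ∈ {i ∈ T | StoresB M w a j i}, (i : ℕ) % a < q := fun i hi =>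
    mem_range.1 (mem_product.1 (mem_filter.1 (hTP hi)).2).2
  have hsymb := card_le_card (uncodedSymbols_subset_range (k := k) hres)
  rw [card_range] at hsymb
  rw [hTκ]
  omega

/-- Recovery threshold of the cyclic coded-at-the-bottom matrix-matrix scheme (Algorithm 5):
`n = m·a₂·b₂` workers; worker `i` holds the `a_u` uncoded A-block-columns
`i, ..., i+a_u-1 (mod a₂)` plus `a_c` generically coded A-block-columns, and the `m·b₁`
uncoded B-block-columns `⌊i/a₂⌋, ..., ⌊i/a₂⌋+m·b₁-1 (mod m·b₂)`.  For a set `T` of workers,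
the unknowns `A_*ᵀ B_j` are decodable iff the workers of `T` holding `B_j` provide
(distinct uncoded A-symbols) + (their number)·a_c ≥ a₂ equations.  Then the recovery
threshold is `τ = n - m·a₂·b₁ + κ_min`, where `κ_min` is the least positive `κ` with
`⌈κ/(m·b₁)⌉ + κ·a_c ≥ a₂ - a_u + 1`: any `τ` workers decode everything, and some `τ - 1`
workers do not. -/
theorem stmt16 (m a₂ b₁ b₂ au ac κmin : ℕ)
    (hm : 0 < m) (ha₂ : 0 < a₂) (hb₁ : 0 < b₁) (hb : b₁ ≤ b₂)
    (hau : 0 < au) (hstore : au + ac ≤ a₂)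
    (hκ0 : 0 < κmin)
    (hκ : a₂ - au + 1 ≤ (κmin + m * b₁ - 1) / (m * b₁) + κmin * ac)
    (hκmin : ∀ κ, 0 < κ → κ < κmin →
      (κ + m * b₁ - 1) / (m * b₁) + κ * ac < a₂ - au + 1) :
    let n := m * a₂ * b₂
    let τ := n - m * a₂ * b₁ + κmin
    let contB : Fin n → Fin (m * b₂) → Prop := fun i bj =>
      ((bj : ℕ) + m * b₂ - (i : ℕ) / a₂) % (m * b₂) < m * b₁
    let decodes : Finset (Fin n) → Fin (m * b₂) → Prop := fun T bj =>
      a₂ ≤ ((T.filter (fun i => contB i bj)).biUnion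
              (fun i => (Finset.range au).image
                (fun p => ((i : ℕ) % a₂ + p) % a₂))).card
          + (T.filter (fun i => contB i bj)).card * ac
    (∀ T : Finset (Fin n), τ ≤ T.card → ∀ bj : Fin (m * b₂), decodes T bj) ∧
    (∃ T : Finset (Fin n), T.card = τ - 1 ∧ ∃ bj : Fin (m * b₂), ¬ decodes T bj) := by
  intro n τ contB decodes
  have hM : 0 < m * b₂ := Nat.mul_pos hm (hb₁.trans_le hb)
  have : NeZero a₂ := ⟨ha₂.ne'⟩
  have : NeZero (m * b₂) := ⟨hM.ne'⟩
  have hw₀ : 0 < m * b₁ := Nat.mul_pos hm hb₁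
  have hw : m * b₁ ≤ m * b₂ := Nat.mul_le_mul_left m hb
  have hn : n = m * b₂ * a₂ := by ring
  have hc : m * a₂ * b₁ = m * b₁ * a₂ := by ring
  refine ⟨fun T hT bj => ?_, ?_⟩
  · rw [← Nat.ceilDiv_eq_add_pred_div] at hκ
    exact le_card_uncodedSymbols_add hn hw₀ hw hau hκ0 hκ bj (by rwa [← hc])
  · have hlt : (κmin - 1) ⌈/⌉ (m * b₁) + au - 1 + (κmin - 1) * ac < a₂ := by
      rcases Nat.lt_or_ge 1 κmin with h | h
      · have := hκmin (κmin - 1) (by omega) (by omega)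
        rw [← Nat.ceilDiv_eq_add_pred_div] at this
        omega
      · obtain rfl : κmin = 1 := by omega
        simp only [Nat.sub_self, zero_ceilDiv, zero_mul]
        omega
    have hτ : τ - 1 = n - m * b₁ * a₂ + (κmin - 1) := by
      simp only [τ, hc]
      omega
    obtain ⟨T, hT, hnot⟩ := exists_card_eq_card_uncodedSymbols_add_lt hn hw₀ hw hlt 0
    exact ⟨T, hT.trans hτ.symm, ⟨0, hM⟩, not_le.2 hnot⟩
end
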